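/- arXiv:1704.08643 — 4 statements merged into one kernel-verified Lean document; each statement's English description precedes it below -/
import Mathlib

section
/- For every k-bounded partition λ ∈ P^(k) and every integer j ≥ 1, c(λ)_j = c(λ)_{j+k+1−λ_j} + λ_j, where parts of a partition beyond its length are taken to be 0. -/
/-!
Common combinatorial background: partitions (as multisets of positive parts),
Young diagram cells, hook lengths, (k+1)-cores, the bijection `b` from cores to
k-bounded partitions and its inverse `coreOf`, residues, horizontal / weak strips,
removable corners and the statistic `r_{νμ}`, k-rectangles, the ring
Λ^(k) = ℤ[h₁,…,h_k] (modelled as a polynomial ring in k variables, which is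
legitimate since h₁,…,h_k are algebraically independent), and the Pieri-type
characterization of the K-k-Schur functions.
-/

noncomputable section

attribute [local instance] Classical.propDecidable

/-- A partition: the multiset of its (positive) parts. -/
structure Ptn where
  parts : Multiset ℕ
  pos : ∀ x ∈ parts, 0 < x

namespace Ptn

instance : Nonempty Ptn := ⟨⟨0, by intro x hx; simp at hx⟩⟩

/-- the size |λ| (sum of the parts). -/
def size (μ : Ptn) : ℕ := μ.parts.sum

/-- the number of parts. -/
def length (μ : Ptn) : ℕ := μ.parts.card

/-- `μ.row i` is the (0-indexed) `i`-th largest part, i.e. λ_{i+1}; `0` if `i ≥ length`. -/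
def row (μ : Ptn) (i : ℕ) : ℕ := ((μ.parts.sort (· ≤ ·)).reverse).getD i 0

/-- `μ.col j` is the number of parts `> j`, i.e. the (0-indexed) `j`-th column length,
which is the conjugate part λ'_{j+1}. -/
def col (μ : Ptn) (j : ℕ) : ℕ := (μ.parts.filter (fun x => j < x)).card

/-- The cells of the Young diagram of `μ` (0-indexed): `(i,j)` with `j < μ.row i`. -/
def cells (μ : Ptn) : Finset (ℕ × ℕ) :=
  (Finset.range (μ.size) ×ˢ Finset.range (μ.size)).filter fun c => c.2 < μ.row c.1

/-- hook length of the (0-indexed) cell `c = (i,j)`: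
`λ_{i+1} + λ'_{j+1} − (i+1) − (j+1) + 1`. -/
def hook (μ : Ptn) (c : ℕ × ℕ) : ℕ := μ.row c.1 + μ.col c.2 - c.1 - c.2 - 1

/-- union `λ ∪ μ`: concatenate the parts and reorder. -/
def union (μ ν : Ptn) : Ptn :=
  ⟨μ.parts + ν.parts, fun x hx => by
    rcases Multiset.mem_add.mp hx with h | h
    · exact μ.pos x h
    · exact ν.pos x h⟩

instance : Union Ptn := ⟨Ptn.union⟩

/-- the partition with the given parts multiset, dropping zero parts. -/
def ofM (M : Multiset ℕ) : Ptn :=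
  ⟨M.filter (fun x => 0 < x), fun x hx => (Multiset.mem_filter.mp hx).2⟩

/-- containment of Young diagrams. -/
def Sub (τ κ : Ptn) : Prop := ∀ i, τ.row i ≤ κ.row i

/-- the conjugate partition. -/
def conj (μ : Ptn) : Ptn := ofM ((Multiset.range (μ.row 0)).map μ.col)

end Ptn

/-- the empty partition. -/
def emptyPtn : Ptn := Ptn.ofM 0

/-- the one-row partition `(s)` (which is `∅` when `s = 0`). -/
def rowPtn (s : ℕ) : Ptn := Ptn.ofM {s}

/-- the k-rectangle `R_t = (t^{k+1-t})`. -/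
def rect (k t : ℕ) : Ptn := Ptn.ofM (Multiset.replicate (k + 1 - t) t)

/-- `R_t^a`, the union of `a` copies of `R_t`. -/
def rectPow (k t a : ℕ) : Ptn := Ptn.ofM (Multiset.replicate (a * (k + 1 - t)) t)

/-- `P = R_{t 0}^{a 0} ∪ ⋯ ∪ R_{t (m-1)}^{a (m-1)}`. -/
def multiRect (k : ℕ) {m : ℕ} (t a : Fin m → ℕ) : Ptn :=
  Ptn.ofM (∑ i : Fin m, Multiset.replicate (a i * (k + 1 - t i)) (t i))

/-- `α_u = #{i ∣ t i ≥ u}`. -/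
def alphaCount {m : ℕ} (t : Fin m → ℕ) (u : ℕ) : ℕ :=
  (Finset.univ.filter fun i : Fin m => u ≤ t i).card

/-- `μ` is k-bounded. -/
def kBounded (k : ℕ) (μ : Ptn) : Prop := ∀ x ∈ μ.parts, x ≤ k

/-- `κ` is a `p`-core: no cell has hook length `p`. -/
def IsCore (p : ℕ) (κ : Ptn) : Prop := ∀ c ∈ κ.cells, κ.hook c ≠ p

/-- `|κ|_{k+1}`: the number of cells of `κ` of hook length at most `k`. -/
def coreSize (k : ℕ) (κ : Ptn) : ℕ := (κ.cells.filter fun c => κ.hook c ≤ k).card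

/-- the map `b` from (k+1)-cores to k-bounded partitions:
`b(κ)_i = #{j ∣ (i,j) ∈ κ, hook ≤ k}`. -/
def bdd (k : ℕ) (κ : Ptn) : Ptn :=
  Ptn.ofM ((Multiset.range κ.length).map fun i =>
    ((Finset.range (κ.row i)).filter fun j => κ.hook (i, j) ≤ k).card)

/-- the core map `c : P^(k) → C_{k+1}`, the inverse of `b`. -/
def coreOf (k : ℕ) (lam : Ptn) : Ptn :=
  Classical.epsilon fun κ => IsCore (k + 1) κ ∧ bdd k κ = lam

/-- the residue of a (0-indexed) cell: `j − i mod (k+1)`. -/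
def res (k : ℕ) (c : ℕ × ℕ) : ZMod (k + 1) := (c.2 : ZMod (k + 1)) - (c.1 : ZMod (k + 1))

/-- `κ/τ` is a horizontal strip: `τ ⊆ κ` and at most one cell in each column. -/
def IsHS (τ κ : Ptn) : Prop := Ptn.Sub τ κ ∧ ∀ j, κ.col j ≤ τ.col j + 1

/-- the cells of the skew shape `κ/τ` (for `τ ⊆ κ`). -/
def skewCells (τ κ : Ptn) : Finset (ℕ × ℕ) := κ.cells.filter fun c => τ.row c.1 ≤ c.2

/-- `κ/τ` is a weak strip of size `r` (for `(k+1)`-cores `τ ⊆ κ`). -/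
def WeakStrip (k r : ℕ) (τ κ : Ptn) : Prop :=
  IsHS τ κ ∧ coreSize k κ = coreSize k τ + r ∧ ((skewCells τ κ).image (res k)).card = r

/-- `c` is a removable corner of `μ`. -/
def RemCorner (μ : Ptn) (c : ℕ × ℕ) : Prop :=
  c.2 + 1 = μ.row c.1 ∧ μ.row (c.1 + 1) ≤ c.2

/-- `r_{νμ}`: the number of distinct residues of ν-nonblocked μ-removable corners. -/
def rnm (k : ℕ) (ν μ : Ptn) : ℕ :=
  ((μ.cells.filter fun c => RemCorner μ c ∧ ¬ c.2 < ν.row (c.1 + 1)).image (res k)).card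

/-- `Λ^(k) = ℤ[h₁,…,h_k]`, a polynomial ring in the algebraically independent `h₁,…,h_k`. -/
abbrev Lamk (k : ℕ) := MvPolynomial (Fin k) ℤ

/-- the complete homogeneous symmetric functions `h_r` for `0 ≤ r ≤ k` (with `h_0 = 1`),
viewed inside `Λ^(k)`. -/
def hsym (k : ℕ) (r : ℕ) : Lamk k :=
  if h0 : r = 0 then 1 else if h : r ≤ k then MvPolynomial.X ⟨r - 1, by omega⟩ else 0

/-- `g : Ptn → Λ^(k)` is the family of K-k-Schur functions: `g_∅ = 1` and the
affine set-valued Pieri rule holds. -/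
def IsKkSchur (k : ℕ) (g : Ptn → Lamk k) : Prop :=
  g emptyPtn = 1 ∧
  ∀ lam : Ptn, kBounded k lam → ∀ r : ℕ, r ≤ k →
    hsym k r * g lam =
      ∑ s ∈ Finset.range (r + 1),
        (-1 : Lamk k) ^ (r - s) *
          ∑ᶠ (μ : Ptn) (_ : kBounded k μ ∧ WeakStrip k s (coreOf k lam) (coreOf k μ)),
            (Nat.choose (rnm k (coreOf k μ) (coreOf k lam)) (r - s) : Lamk k) * g μ

/-- the generalized binomial coefficient `binom(n, j)` for integers `n, j`,
equal to `n(n−1)⋯(n−j+1)/j!` for `j ≥ 0` and to `0` for `j < 0`. -/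
def ibinom (n : ℤ) (j : ℤ) : ℤ :=
  if j < 0 then 0 else (∏ i ∈ Finset.range j.toNat, (n - i)) / (j.toNat.factorial : ℤ)

end

noncomputable section

/-- the partition `λ̄` obtained from `λ` by removing its smallest part. -/
def barPtn (μ : Ptn) : Ptn :=
  ⟨μ.parts.erase (μ.row (μ.length - 1)),
   fun x hx => μ.pos x (Multiset.mem_of_mem_erase hx)⟩

/-- the k-conjugate `λ^{ω_k} = b(c(λ)')`. -/
def kconj (k : ℕ) (lam : Ptn) : Ptn := bdd k (Ptn.conj (coreOf k lam))

/-- the covering relation of the weak order on `P^(k)`. -/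
def WeakCover (k : ℕ) (lam mu : Ptn) : Prop :=
  kBounded k lam ∧ kBounded k mu ∧ Ptn.Sub lam mu ∧
    Ptn.Sub (kconj k lam) (kconj k mu) ∧ mu.size = lam.size + 1

/-- the weak order on `P^(k)`: the order generated by the covering relation. -/
def WeakLe (k : ℕ) : Ptn → Ptn → Prop := Relation.ReflTransGen (WeakCover k)

end

section KCoreAux
open Classical
attribute [local instance] Classical.propDecidable

namespace Ptn

/-- the descending sorted list of parts -/
def sl (μ : Ptn) : List ℕ := (μ.parts.sort (· ≤ ·)).reverse

lemma sl_coe (μ : Ptn) : (μ.sl : Multiset ℕ) = μ.parts := by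
  unfold sl
  rw [Multiset.coe_reverse, Multiset.sort_eq]

lemma sl_sorted (μ : Ptn) : μ.sl.Pairwise (· ≥ ·) := by
  unfold sl
  rw [List.pairwise_reverse]
  have := Multiset.pairwise_sort (α := ℕ) μ.parts (· ≤ ·)
  exact this

lemma sl_length (μ : Ptn) : μ.sl.length = μ.length := by
  have := congrArg Multiset.card μ.sl_coe
  simpa [length] using this

lemma row_def (μ : Ptn) (i : ℕ) : μ.row i = μ.sl.getD i 0 := rfl

lemma row_anti (μ : Ptn) {i j : ℕ} (h : i ≤ j) : μ.row j ≤ μ.row i := by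
  rw [row_def, row_def]
  by_cases hj : j < μ.sl.length
  · have hi : i < μ.sl.length := lt_of_le_of_lt h hj
    rw [List.getD_eq_getElem _ _ hj, List.getD_eq_getElem _ _ hi]
    rcases eq_or_lt_of_le h with rfl | hlt
    · exact le_refl _
    · exact List.Pairwise.rel_get_of_lt μ.sl_sorted (a := ⟨i, hi⟩) (b := ⟨j, hj⟩) hlt
  · rw [List.getD_eq_default _ _ (le_of_not_gt hj)]
    exact Nat.zero_le _

lemma row_mem_parts (μ : Ptn) {i : ℕ} (h : i < μ.length) : μ.row i ∈ μ.parts := by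
  rw [row_def]
  have h' : i < μ.sl.length := by rw [sl_length]; exact h
  rw [List.getD_eq_getElem _ _ h']
  rw [← μ.sl_coe]
  exact_mod_cast List.getElem_mem h'

lemma row_pos_iff (μ : Ptn) {i : ℕ} : 0 < μ.row i ↔ i < μ.length := by
  constructor
  · intro h
    by_contra h'
    rw [row_def, List.getD_eq_default] at h
    · omega
    · rw [sl_length]; omega
  · intro h
    exact μ.pos _ (μ.row_mem_parts h)

lemma row_eq_zero (μ : Ptn) {i : ℕ} (h : μ.length ≤ i) : μ.row i = 0 := by
  have := μ.row_pos_iff (i := i); omega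

lemma parts_eq_map_row (μ : Ptn) :
    μ.parts = (Multiset.range μ.length).map μ.row := by
  have : μ.sl = (List.range μ.length).map μ.row := by
    apply List.ext_getElem
    · simp [sl_length]
    · intro n h1 h2
      simp only [List.getElem_map, List.getElem_range]
      rw [row_def, List.getD_eq_getElem _ _ h1]
  rw [← μ.sl_coe, this]
  simp [Multiset.range]

lemma length_le_size (μ : Ptn) : μ.length ≤ μ.size := by
  have := Multiset.card_nsmul_le_sum (s := μ.parts) (a := 1) μ.pos
  simpa [length, size] using this

lemma row_le_size (μ : Ptn) (i : ℕ) : μ.row i ≤ μ.size := by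
  by_cases h : i < μ.length
  · exact Multiset.single_le_sum (fun x _ => Nat.zero_le x) _ (μ.row_mem_parts h)
  · rw [μ.row_eq_zero (by omega)]; exact Nat.zero_le _

lemma mem_cells (μ : Ptn) (c : ℕ × ℕ) : c ∈ μ.cells ↔ c.2 < μ.row c.1 := by
  unfold cells
  simp only [Finset.mem_filter, Finset.mem_product, Finset.mem_range]
  constructor
  · tauto
  · intro h
    have h1 : 0 < μ.row c.1 := by omega
    have h2 : c.1 < μ.length := μ.row_pos_iff.mp h1
    have h3 := μ.length_le_size
    have h4 := μ.row_le_size c.1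
    exact ⟨⟨by omega, by omega⟩, h⟩

lemma col_card (μ : Ptn) (j : ℕ) :
    μ.col j = ((Finset.range μ.length).filter (fun i => j < μ.row i)).card := by
  unfold col
  rw [μ.parts_eq_map_row]
  rw [Multiset.filter_map, Multiset.card_map]
  show _ = Multiset.card (Multiset.filter _ (Finset.range μ.length).val)
  have : (Finset.range μ.length).val = Multiset.range μ.length := rfl
  rw [this]
  congr 1

end Ptn

end KCoreAux
section KCoreAux2
open Classical
attribute [local instance] Classical.propDecidable

lemma downward_closed_range {S : Finset ℕ}
    (h : ∀ a b : ℕ, a ≤ b → b ∈ S → a ∈ S) : S = Finset.range S.card := by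
  ext i
  simp only [Finset.mem_range]
  constructor
  · intro hi
    have hsub : Finset.range (i + 1) ⊆ S := by
      intro a ha
      simp only [Finset.mem_range] at ha
      exact h a i (by omega) hi
    have := Finset.card_le_card hsub
    simp only [Finset.card_range] at this
    omega
  · intro hi
    by_contra hns
    have hsub : S ⊆ Finset.range i := by
      intro b hb
      simp only [Finset.mem_range]
      by_contra hbi
      exact hns (h i b (by omega) hb)
    have := Finset.card_le_card hsub
    simp only [Finset.card_range] at this
    omega

namespace Ptn

lemma lt_col_iff (μ : Ptn) (i j : ℕ) : i < μ.col j ↔ j < μ.row i := by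
  set S := (Finset.range μ.length).filter (fun i => j < μ.row i) with hS
  have hdc : ∀ a b : ℕ, a ≤ b → b ∈ S → a ∈ S := by
    intro a b hab hb
    simp only [hS, Finset.mem_filter, Finset.mem_range] at hb ⊢
    have := μ.row_anti hab
    exact ⟨by omega, by omega⟩
  have hcard : S = Finset.range (μ.col j) := by
    rw [downward_closed_range hdc]
    congr 1
    rw [μ.col_card j]
  constructor
  · intro h
    have : i ∈ S := by rw [hcard]; simp only [Finset.mem_range]; exact h
    simp only [hS, Finset.mem_filter] at this
    exact this.2
  · intro h
    have hi : i ∈ S := by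
      simp only [hS, Finset.mem_filter, Finset.mem_range]
      exact ⟨μ.row_pos_iff.mp (by omega), h⟩
    rw [hcard] at hi
    simpa using hi

lemma hook_cast (μ : Ptn) {i j : ℕ} (h : j < μ.row i) :
    (μ.hook (i, j) : ℤ) = (μ.row i : ℤ) + μ.col j - i - j - 1 := by
  have h2 : i + 1 ≤ μ.col j := (μ.lt_col_iff i j).mpr h
  unfold hook
  simp only
  omega

lemma col_zero (μ : Ptn) : μ.col 0 = μ.length := by
  unfold col length
  congr 1
  apply Multiset.filter_eq_self.mpr
  exact μ.pos

end Ptn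

end KCoreAux2
section KCoreAux3
open Classical
attribute [local instance] Classical.propDecidable

namespace Ptn

def pbeta (κ : Ptn) (i : ℕ) : ℤ := (κ.row i : ℤ) - i

def pf (κ : Ptn) (j : ℕ) : ℤ := (j : ℤ) + 1 - κ.col j

def Bset (κ : Ptn) : Set ℤ := Set.range κ.pbeta

lemma pbeta_anti (κ : Ptn) {i m : ℕ} (h : i < m) : κ.pbeta m < κ.pbeta i := by
  have := κ.row_anti (le_of_lt h)
  unfold pbeta
  omega

lemma mem_Bset_of_le (κ : Ptn) {c : ℤ} (h : c ≤ -(κ.length : ℤ)) : c ∈ κ.Bset := by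
  refine ⟨(-c).toNat, ?_⟩
  have h1 : κ.length ≤ (-c).toNat := by omega
  have := κ.row_eq_zero h1
  unfold pbeta
  omega

lemma col_anti (κ : Ptn) {j j' : ℕ} (h : j ≤ j') : κ.col j' ≤ κ.col j := by
  rw [κ.col_card j, κ.col_card j']
  apply Finset.card_le_card
  intro x hx
  simp only [Finset.mem_filter] at hx ⊢
  exact ⟨hx.1, by have := hx.2; omega⟩

lemma pf_step (κ : Ptn) (j : ℕ) : κ.pf j + 1 ≤ κ.pf (j + 1) := by
  have := κ.col_anti (show j ≤ j + 1 by omega)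
  unfold pf
  push_cast
  omega

lemma pf_ge (κ : Ptn) (j : ℕ) : 1 - (κ.length : ℤ) + j ≤ κ.pf j := by
  induction j with
  | zero => simp [pf, κ.col_zero]
  | succ n ih =>
    have := κ.pf_step n
    push_cast
    omega

lemma pf_not_mem (κ : Ptn) (j : ℕ) : κ.pf j ∉ κ.Bset := by
  rintro ⟨i, hi⟩
  unfold pbeta pf at hi
  by_cases h : i < κ.col j
  · have hrow : j < κ.row i := (κ.lt_col_iff i j).mp h
    omega
  · have hrow : ¬ j < κ.row i := fun hc => h ((κ.lt_col_iff i j).mpr hc)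
    omega

lemma pf_lt_pbeta_iff (κ : Ptn) (i j : ℕ) : κ.pf j < κ.pbeta i ↔ j < κ.row i := by
  constructor
  · intro h
    by_contra hc
    have hcol : ¬ i < κ.col j := fun h2 => hc ((κ.lt_col_iff i j).mp h2)
    unfold pf pbeta at h
    omega
  · intro h
    have hcol : i < κ.col j := (κ.lt_col_iff i j).mpr h
    unfold pf pbeta
    omega

lemma exists_pf (κ : Ptn) {c : ℤ} (h : c ∉ κ.Bset) : ∃ j, κ.pf j = c := by
  set L := (κ.length : ℤ) with hL
  have hc0 : -L < c := by
    by_contra hc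
    exact h (κ.mem_Bset_of_le (by omega))
  set P : ℕ → Prop := fun j => κ.pf j ≤ c with hP
  have hpf0 : κ.pf 0 = 1 - L := by
    unfold pf
    rw [κ.col_zero]
    push_cast
    ring
  have hP0 : P 0 := by
    simp only [hP]
    omega
  set N : ℕ := (c + L).toNat with hN
  set j0 := Nat.findGreatest P N with hj0
  have hPj0 : P j0 := Nat.findGreatest_spec (Nat.zero_le N) hP0
  have hj0N : j0 + 1 ≤ N := by
    by_contra hc2
    have h1 : (N : ℤ) ≤ j0 := by omega
    have h2 := κ.pf_ge j0
    have h3 : (N : ℤ) = c + L := by omega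
    simp only [hP] at hPj0
    omega
  have hnot : ¬ P (j0 + 1) :=
    Nat.findGreatest_is_greatest (Nat.lt_succ_self j0) hj0N
  simp only [hP] at hPj0 hnot
  push_neg at hnot
  rcases eq_or_lt_of_le hPj0 with heq | hlt
  · exact ⟨j0, heq⟩
  · exfalso
    set d : ℤ := c - κ.pf j0 with hd
    have hd1 : 1 ≤ d := by omega
    have hstep : κ.pf (j0 + 1) = (j0 : ℤ) + 2 - κ.col (j0 + 1) := by
      unfold pf; push_cast; ring
    have hpfj0 : κ.pf j0 = (j0 : ℤ) + 1 - κ.col j0 := rfl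
    have hd2 : d ≤ (κ.col j0 : ℤ) - κ.col (j0 + 1) := by omega
    set m : ℕ := κ.col j0 - d.toNat with hm
    have hcol1 : m < κ.col j0 := by omega
    have hcol2 : κ.col (j0 + 1) ≤ m := by omega
    have hrow1 : j0 < κ.row m := (κ.lt_col_iff m j0).mp hcol1
    have hrow2 : κ.row m ≤ j0 + 1 := by
      by_contra hc3
      exact (by omega : ¬ m < κ.col (j0+1)) ((κ.lt_col_iff m (j0+1)).mpr (by omega))
    have hrowm : κ.row m = j0 + 1 := by omega
    apply h
    refine ⟨m, ?_⟩
    unfold pbeta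
    rw [hrowm]
    push_cast
    omega

lemma hook_eq_pbeta_sub_pf (κ : Ptn) {i j : ℕ} (h : j < κ.row i) :
    (κ.hook (i, j) : ℤ) = κ.pbeta i - κ.pf j := by
  rw [κ.hook_cast h]
  unfold pbeta pf
  ring

end Ptn

end KCoreAux3
section KCoreAux4
open Classical
attribute [local instance] Classical.propDecidable

namespace Ptn

/-- closure of the beta-set under subtracting k+1 -/
def closedB (k : ℕ) (κ : Ptn) : Prop := ∀ i : ℕ, κ.pbeta i - (k + 1) ∈ κ.Bset

lemma pbeta_le_of_le (κ : Ptn) {i m : ℕ} (h : i ≤ m) : κ.pbeta m ≤ κ.pbeta i := by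
  rcases eq_or_lt_of_le h with rfl | h
  · exact le_refl _
  · exact le_of_lt (κ.pbeta_anti h)

lemma lt_of_pbeta_lt (κ : Ptn) {i m : ℕ} (h : κ.pbeta m < κ.pbeta i) : i < m := by
  by_contra hc
  have := κ.pbeta_le_of_le (show m ≤ i by omega)
  omega

lemma closed_of_isCore {k : ℕ} {κ : Ptn} (h : IsCore (k + 1) κ) : closedB k κ := by
  intro i
  by_cases hri : κ.row i = 0
  · refine ⟨i + (k + 1), ?_⟩
    have h0 : κ.row (i + (k + 1)) = 0 := by
      have := κ.row_anti (show i ≤ i + (k + 1) by omega)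
      omega
    unfold pbeta
    rw [h0, hri]
    push_cast
    ring
  · by_contra hB
    obtain ⟨j, hj⟩ := κ.exists_pf hB
    have hlt : κ.pf j < κ.pbeta i := by rw [hj]; omega
    have hjr : j < κ.row i := (κ.pf_lt_pbeta_iff i j).mp hlt
    have hcell : (i, j) ∈ κ.cells := (κ.mem_cells (i, j)).mpr hjr
    have hhz := κ.hook_eq_pbeta_sub_pf hjr
    have : κ.hook (i, j) = k + 1 := by omega
    exact h (i, j) hcell this

lemma isCore_of_closed {k : ℕ} {κ : Ptn} (h : closedB k κ) : IsCore (k + 1) κ := by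
  intro c hc hhook
  obtain ⟨i, j⟩ := c
  have hjr : j < κ.row i := (κ.mem_cells (i, j)).mp hc
  have hhz := κ.hook_eq_pbeta_sub_pf hjr
  have hfj : κ.pf j = κ.pbeta i - (k + 1) := by
    rw [hhook] at hhz
    push_cast at hhz
    omega
  exact κ.pf_not_mem j (hfj ▸ h i)

lemma notB_up {k : ℕ} {κ : Ptn} (h : closedB k κ) {c : ℤ}
    (hc : c ∉ κ.Bset) : c + (k + 1) ∉ κ.Bset := by
  rintro ⟨m, hm⟩
  apply hc
  have := h m
  rw [hm] at this
  simpa using this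

lemma gap {k : ℕ} {κ : Ptn} (h : closedB k κ) (i : ℕ) :
    κ.pbeta i - (k + 1) ≤ κ.pbeta (i + 1) := by
  obtain ⟨m, hm⟩ := h i
  by_contra hc
  push_neg at hc
  have hmi : i < m := κ.lt_of_pbeta_lt (by omega)
  have : κ.pbeta m ≤ κ.pbeta (i + 1) := κ.pbeta_le_of_le (by omega)
  omega

/-- the window below `pbeta i` -/
noncomputable def winB (k : ℕ) (κ : Ptn) (i : ℕ) : Finset ℤ :=
  Finset.Ioo (κ.pbeta i - (k + 1)) (κ.pbeta i)

/-- the number of beta-numbers in the window -/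
noncomputable def cntB (k : ℕ) (κ : Ptn) (i : ℕ) : ℕ :=
  ((winB k κ i).filter (fun c => c ∈ κ.Bset)).card

/-- the number of non-beta-numbers in the window -/
noncomputable def cntN (k : ℕ) (κ : Ptn) (i : ℕ) : ℕ :=
  ((winB k κ i).filter (fun c => c ∉ κ.Bset)).card

/-- the number of cells of hook length at most k in row i -/
def cntH (k : ℕ) (κ : Ptn) (i : ℕ) : ℕ :=
  ((Finset.range (κ.row i)).filter fun j => κ.hook (i, j) ≤ k).card

lemma win_card (k : ℕ) (κ : Ptn) (i : ℕ) : (winB k κ i).card = k := by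
  unfold winB
  rw [Int.card_Ioo]
  omega

lemma cntB_add_cntN (k : ℕ) (κ : Ptn) (i : ℕ) : cntB k κ i + cntN k κ i = k := by
  unfold cntB cntN
  rw [Finset.card_filter_add_card_filter_not]
  exact win_card k κ i

lemma pf_strictMono (κ : Ptn) : StrictMono κ.pf :=
  strictMono_nat_of_lt_succ (fun n => by have := κ.pf_step n; omega)

lemma cntH_eq_cntN (k : ℕ) (κ : Ptn) (i : ℕ) : cntH k κ i = cntN k κ i := by
  unfold cntH cntN
  apply Finset.card_bij (fun j _ => κ.pf j)
  · intro j hj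
    simp only [Finset.mem_filter, Finset.mem_range] at hj
    obtain ⟨hjr, hjh⟩ := hj
    have hhz := κ.hook_eq_pbeta_sub_pf hjr
    simp only [Finset.mem_filter, winB, Finset.mem_Ioo]
    refine ⟨⟨by omega, (κ.pf_lt_pbeta_iff i j).mpr hjr⟩, κ.pf_not_mem j⟩
  · intro a _ b _ hab
    exact κ.pf_strictMono.injective hab
  · intro c hc
    simp only [Finset.mem_filter, winB, Finset.mem_Ioo] at hc
    obtain ⟨⟨hc1, hc2⟩, hc3⟩ := hc
    obtain ⟨j, hj⟩ := κ.exists_pf hc3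
    have hjr : j < κ.row i := (κ.pf_lt_pbeta_iff i j).mp (by omega)
    have hhz := κ.hook_eq_pbeta_sub_pf hjr
    refine ⟨j, ?_, hj⟩
    simp only [Finset.mem_filter, Finset.mem_range]
    exact ⟨hjr, by omega⟩

end Ptn

end KCoreAux4
section KCoreAux5
open Classical
attribute [local instance] Classical.propDecidable

namespace Ptn

lemma cntH_le (k : ℕ) (κ : Ptn) (i : ℕ) : cntH k κ i ≤ k := by
  have h1 := cntB_add_cntN k κ i
  have := cntH_eq_cntN k κ i
  omega

lemma cntH_zero (k : ℕ) (κ : Ptn) {i : ℕ} (h : κ.row i = 0) : cntH k κ i = 0 := by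
  unfold cntH
  rw [h]
  simp

lemma cntB_eq_of_pbeta {k : ℕ} (κ : Ptn) {i m : ℕ}
    (hm : κ.pbeta m = κ.pbeta i - (k + 1)) (him : i < m) :
    cntB k κ i = m - i - 1 := by
  unfold cntB
  have hset : (winB k κ i).filter (fun c => c ∈ κ.Bset) = (Finset.Ioo i m).image κ.pbeta := by
    ext c
    simp only [Finset.mem_filter, winB, Finset.mem_Ioo, Finset.mem_image]
    constructor
    · rintro ⟨⟨h1, h2⟩, t, ht⟩
      refine ⟨t, ⟨?_, ?_⟩, ht⟩
      · exact κ.lt_of_pbeta_lt (by omega)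
      · by_contra hc
        have := κ.pbeta_le_of_le (show m ≤ t by omega)
        omega
    · rintro ⟨t, ⟨ht1, ht2⟩, rfl⟩
      have h1 := κ.pbeta_anti ht1
      have h2 := κ.pbeta_anti ht2
      exact ⟨⟨by omega, h1⟩, ⟨t, rfl⟩⟩
  rw [hset, Finset.card_image_of_injOn, Nat.card_Ioo]
  intro a _ b _ hab
  by_contra hne
  rcases Nat.lt_or_ge a b with h | h
  · exact absurd hab (by have := κ.pbeta_anti h; omega)
  · exact absurd hab (by have := κ.pbeta_anti (show b < a by omega); omega)

lemma exists_m {k : ℕ} {κ : Ptn} (h : closedB k κ) (i : ℕ) :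
    ∃ m, i < m ∧ κ.pbeta m = κ.pbeta i - (k + 1) ∧ m = i + (k + 1 - cntH k κ i) := by
  obtain ⟨m, hm⟩ := h i
  have him : i < m := κ.lt_of_pbeta_lt (by omega)
  have hcb := κ.cntB_eq_of_pbeta hm him
  have h1 := cntB_add_cntN k κ i
  have h2 := cntH_eq_cntN k κ i
  have h3 := cntH_le k κ i
  exact ⟨m, him, hm, by omega⟩

lemma row_recursion {k : ℕ} {κ : Ptn} (h : closedB k κ) (i : ℕ) :
    κ.row i = κ.row (i + (k + 1 - cntH k κ i)) + cntH k κ i := by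
  by_cases hri : κ.row i = 0
  · rw [cntH_zero k κ hri, hri]
    have : κ.row (i + (k + 1 - 0)) ≤ κ.row i := κ.row_anti (by omega)
    omega
  · obtain ⟨m, him, hm, hmeq⟩ := exists_m h i
    have h3 := cntH_le k κ i
    unfold pbeta at hm
    rw [← hmeq]
    have : (m : ℤ) = i + (k + 1 - cntH k κ i) := by
      rw [hmeq]; push_cast; omega
    omega

lemma cntH_pos {k : ℕ} {κ : Ptn} (h : closedB k κ) {i : ℕ} (hrow : 0 < κ.row i) :
    0 < cntH k κ i := by
  rw [cntH_eq_cntN]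
  rcases Nat.eq_zero_or_pos (cntN k κ i) with h0 | h0
  · exfalso
    have hwin : ∀ c ∈ winB k κ i, c ∈ κ.Bset := by
      intro c hc
      by_contra hc2
      have : c ∈ (winB k κ i).filter (fun c => c ∉ κ.Bset) := Finset.mem_filter.mpr ⟨hc, hc2⟩
      unfold cntN at h0
      rw [Finset.card_eq_zero] at h0
      simp [h0] at this
    have key : ∀ n : ℕ, ∀ c : ℤ, c ≤ κ.pbeta i → κ.pbeta i - c ≤ n → c ∈ κ.Bset := by
      intro n
      induction n using Nat.strong_induction_on with
      | _ n ih =>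
        intro c hc1 hc2
        rcases eq_or_lt_of_le hc1 with rfl | hlt
        · exact ⟨i, rfl⟩
        · by_cases hwc : κ.pbeta i - (k + 1) < c
          · exact hwin c (Finset.mem_Ioo.mpr ⟨hwc, hlt⟩)
          · push_neg at hwc
            have hk1 : (0:ℤ) < k + 1 := by positivity
            have hmem : c + (k + 1) ∈ κ.Bset := by
              apply ih (n - (k+1)) (by omega) _ (by omega) (by omega)
            obtain ⟨m, hm⟩ := hmem
            have := h m
            rw [hm] at this
            simpa using this
    have hiL : i < κ.length := κ.row_pos_iff.mp hrow
    have hpf0 : κ.pf 0 = 1 - (κ.length : ℤ) := by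
      unfold pf
      rw [κ.col_zero]
      push_cast
      ring
    have : κ.pf 0 ∈ κ.Bset := by
      apply key (κ.pbeta i - κ.pf 0).toNat
      · unfold pbeta
        omega
      · omega
    exact κ.pf_not_mem 0 this
  · exact h0

lemma cntH_anti_succ {k : ℕ} {κ : Ptn} (h : closedB k κ) (i : ℕ) :
    cntH k κ (i + 1) ≤ cntH k κ i := by
  rw [cntH_eq_cntN, cntH_eq_cntN]
  unfold cntN
  apply Finset.card_le_card_of_injOn
    (fun c => if κ.pbeta i - (k + 1) < c then c else c + (k + 1))
  · intro c hc
    simp only [Finset.mem_coe, Finset.mem_filter, winB, Finset.mem_Ioo] at hc ⊢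
    obtain ⟨⟨hc1, hc2⟩, hc3⟩ := hc
    have hbi : κ.pbeta (i+1) < κ.pbeta i := κ.pbeta_anti (by omega)
    have hgap := gap h i
    by_cases hcase : κ.pbeta i - (k + 1) < c
    · rw [if_pos hcase]
      exact ⟨⟨hcase, by omega⟩, hc3⟩
    · rw [if_neg hcase]
      push_neg at hcase
      have hnb : c + (k + 1) ∉ κ.Bset := notB_up h hc3
      have hne : c + (k + 1) ≠ κ.pbeta i := by
        intro heq
        exact hnb (heq ▸ ⟨i, rfl⟩)
      refine ⟨⟨by omega, ?_⟩, hnb⟩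
      have : c + (k+1) ≤ κ.pbeta i := by omega
      omega
  · intro a ha b hb hab
    simp only [Finset.mem_coe, Finset.mem_filter, winB, Finset.mem_Ioo] at ha hb
    obtain ⟨⟨ha1, ha2⟩, -⟩ := ha
    obtain ⟨⟨hb1, hb2⟩, -⟩ := hb
    simp only at hab
    split_ifs at hab <;> omega
  
lemma cntH_anti {k : ℕ} {κ : Ptn} (h : closedB k κ) {i j : ℕ} (hij : i ≤ j) :
    cntH k κ j ≤ cntH k κ i := by
  induction j with
  | zero => have : i = 0 := by omega
            subst this; exact le_refl _
  | succ n ih =>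
    rcases Nat.lt_or_ge i (n+1) with hlt | hge
    · exact le_trans (cntH_anti_succ h n) (ih (by omega))
    · have : i = n + 1 := by omega
      subst this; exact le_refl _

end Ptn

end KCoreAux5
section KCoreAux6
open Classical
attribute [local instance] Classical.propDecidable

namespace Ptn

lemma ofM_parts (f : ℕ → ℕ) (n : ℕ) (hpos : ∀ i, i < n → 0 < f i) :
    (Ptn.ofM ((Multiset.range n).map f)).parts = (Multiset.range n).map f := by
  unfold ofM
  simp only
  apply Multiset.filter_eq_self.mpr
  intro x hx
  obtain ⟨i, hi, rfl⟩ := Multiset.mem_map.mp hx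
  exact hpos i (Multiset.mem_range.mp hi)

lemma ofM_row (f : ℕ → ℕ) (n : ℕ) (hanti : ∀ a b : ℕ, a ≤ b → f b ≤ f a)
    (hzero : ∀ i, n ≤ i → f i = 0) (hpos : ∀ i, i < n → 0 < f i) (i : ℕ) :
    (Ptn.ofM ((Multiset.range n).map f)).row i = f i := by
  set μ := Ptn.ofM ((Multiset.range n).map f) with hμ
  have hparts : μ.parts = (Multiset.range n).map f := ofM_parts f n hpos
  have hsl : μ.sl = (List.range n).map f := by
    refine (fun h1 h2 h3 => List.Perm.eq_of_pairwise' (r := (· ≥ ·)) h2 h3 h1) ?_ ?_ ?_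
    · apply Multiset.coe_eq_coe.mp
      rw [μ.sl_coe, hparts]
      rfl
    · exact μ.sl_sorted
    · rw [List.pairwise_map]
      apply List.Pairwise.imp (R := (· < ·))
      · intro a b hab
        exact hanti a b (le_of_lt hab)
      · exact List.pairwise_lt_range (n := n)
  rw [row_def, hsl]
  by_cases hin : i < n
  · have hin' : i < ((List.range n).map f).length := by simpa using hin
    rw [List.getD_eq_getElem _ _ hin']
    simp
  · rw [List.getD_eq_default]
    · exact (hzero i (by omega)).symm
    · simpa using hin

lemma ofM_length (f : ℕ → ℕ) (n : ℕ) (hpos : ∀ i, i < n → 0 < f i) :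
    (Ptn.ofM ((Multiset.range n).map f)).length = n := by
  unfold length
  rw [ofM_parts f n hpos]
  simp

lemma ext_row {μ ν : Ptn} (h : ∀ i, μ.row i = ν.row i) : μ = ν := by
  have hlen : μ.length = ν.length := by
    by_contra hc
    rcases Nat.lt_or_ge μ.length ν.length with hl | hl
    · have h1 := μ.row_eq_zero (le_refl μ.length)
      have h2 := ν.row_pos_iff.mpr hl
      rw [h μ.length] at h1
      omega
    · have h1 := ν.row_eq_zero (le_refl ν.length)
      have h2 : ν.length < μ.length := by omega
      have h3 := μ.row_pos_iff.mpr h2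
      rw [h ν.length] at h3
      omega
  have hparts : μ.parts = ν.parts := by
    rw [μ.parts_eq_map_row, ν.parts_eq_map_row, hlen]
    apply Multiset.map_congr rfl
    intro x _
    exact h x
  cases μ; cases ν
  simpa using hparts

lemma bdd_eq_ofM (k : ℕ) (κ : Ptn) :
    bdd k κ = Ptn.ofM ((Multiset.range κ.length).map (fun i => cntH k κ i)) := rfl

lemma bdd_row {k : ℕ} {κ : Ptn} (h : closedB k κ) (i : ℕ) :
    (bdd k κ).row i = cntH k κ i := by
  rw [bdd_eq_ofM]
  apply ofM_row
  · intro a b hab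
    exact cntH_anti h hab
  · intro m hm
    exact cntH_zero k κ (κ.row_eq_zero hm)
  · intro m hm
    exact cntH_pos h (κ.row_pos_iff.mpr hm)

end Ptn

end KCoreAux6
section KCoreAux7
open Classical
attribute [local instance] Classical.propDecidable

/-- the row lengths of the core built from a k-bounded partition with row function ρ -/
def gfun (k : ℕ) (ρ : ℕ → ℕ) (L : ℕ) (i : ℕ) : ℕ :=
  if h : L ≤ i ∨ ρ i = 0 ∨ k < ρ i then 0
  else ρ i + gfun k ρ L (i + (k + 1 - ρ i))
termination_by L - i
decreasing_by
  push_neg at h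
  omega

lemma gfun_zero (k : ℕ) (ρ : ℕ → ℕ) (L : ℕ) {i : ℕ}
    (h : L ≤ i ∨ ρ i = 0 ∨ k < ρ i) : gfun k ρ L i = 0 := by
  rw [gfun, dif_pos h]

lemma gfun_expand (k : ℕ) (ρ : ℕ → ℕ) (L : ℕ) {i : ℕ}
    (h1 : i < L) (h2 : 0 < ρ i) (h3 : ρ i ≤ k) :
    gfun k ρ L i = ρ i + gfun k ρ L (i + (k + 1 - ρ i)) := by
  rw [gfun]
  rw [dif_neg (by omega)]

section Construct

variable {k L : ℕ} {ρ : ℕ → ℕ}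
  (hanti : ∀ a b : ℕ, a ≤ b → ρ b ≤ ρ a)
  (hpos : ∀ i, i < L → 0 < ρ i)
  (hzero : ∀ i, L ≤ i → ρ i = 0)
  (hk : ∀ i, ρ i ≤ k)

include hanti hpos hzero hk

lemma gfun_anti_aux : ∀ n i j : ℕ, L - i ≤ n → i ≤ j → gfun k ρ L j ≤ gfun k ρ L i := by
  intro n
  induction n with
  | zero =>
    intro i j h1 h2
    rw [gfun_zero k ρ L (Or.inl (by omega)), gfun_zero k ρ L (Or.inl (by omega))]
  | succ n ih =>
    intro i j h1 h2
    by_cases hiL : L ≤ i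
    · rw [gfun_zero k ρ L (Or.inl hiL), gfun_zero k ρ L (Or.inl (by omega))]
    · rcases eq_or_lt_of_le h2 with rfl | hij
      · exact le_refl _
      · push_neg at hiL
        have hρi := hpos i hiL
        have hρik := hk i
        rw [gfun_expand k ρ L hiL hρi hρik]
        set j1 := i + (k + 1 - ρ i) with hj1
        by_cases hjL : L ≤ j ∨ ρ j = 0
        · rw [gfun_zero k ρ L (by omega)]
          omega
        · push_neg at hjL
          obtain ⟨hjL, hρj⟩ := hjL
          have hρjk := hk j
          rw [gfun_expand k ρ L (by omega) (by omega) hρjk]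
          set j2 := j + (k + 1 - ρ j) with hj2
          have hρji : ρ j ≤ ρ i := hanti i j h2
          have hj12 : j1 ≤ j2 := by omega
          have hLj1 : L - j1 ≤ n := by omega
          have := ih j1 j2 hLj1 hj12
          omega

lemma gfun_anti {i j : ℕ} (h : i ≤ j) : gfun k ρ L j ≤ gfun k ρ L i :=
  gfun_anti_aux hanti hpos hzero hk (L - i) i j (le_refl _) h

lemma gfun_pos {i : ℕ} (h : i < L) : 0 < gfun k ρ L i := by
  rw [gfun_expand k ρ L h (hpos i h) (hk i)]
  have := hpos i h
  omega

/-- the constructed core -/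
noncomputable def coreC (k : ℕ) (ρ : ℕ → ℕ) (L : ℕ) : Ptn :=
  Ptn.ofM ((Multiset.range L).map (gfun k ρ L))

lemma coreC_row (i : ℕ) : (coreC k ρ L).row i = gfun k ρ L i := by
  apply Ptn.ofM_row
  · exact fun a b hab => gfun_anti hanti hpos hzero hk hab
  · exact fun m hm => gfun_zero k ρ L (Or.inl hm)
  · exact fun m hm => gfun_pos hanti hpos hzero hk hm

lemma coreC_closed : Ptn.closedB k (coreC k ρ L) := by
  intro i
  set κ := coreC k ρ L with hκ
  have hrow : ∀ m, κ.row m = gfun k ρ L m := coreC_row hanti hpos hzero hk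
  by_cases hiL : i < L
  · refine ⟨i + (k + 1 - ρ i), ?_⟩
    have hexp := gfun_expand k ρ L hiL (hpos i hiL) (hk i)
    have h3 := hk i
    have h4 := hpos i hiL
    unfold Ptn.pbeta
    rw [hrow, hrow, hexp]
    push_cast
    omega
  · refine ⟨i + (k + 1), ?_⟩
    have h1 : gfun k ρ L i = 0 := gfun_zero k ρ L (Or.inl (by omega))
    have h2 : gfun k ρ L (i + (k + 1)) = 0 := gfun_zero k ρ L (Or.inl (by omega))
    unfold Ptn.pbeta
    rw [hrow, hrow, h1, h2]
    push_cast
    ring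

lemma coreC_cntH (i : ℕ) : Ptn.cntH k (coreC k ρ L) i = ρ i := by
  set κ := coreC k ρ L with hκ
  have hrow : ∀ m, κ.row m = gfun k ρ L m := coreC_row hanti hpos hzero hk
  by_cases hiL : i < L
  · set m := i + (k + 1 - ρ i) with hm
    have h3 := hk i
    have h4 := hpos i hiL
    have him : i < m := by omega
    have hpb : κ.pbeta m = κ.pbeta i - (k + 1) := by
      have hexp := gfun_expand k ρ L hiL h4 h3
      rw [← hm] at hexp
      unfold Ptn.pbeta
      rw [hrow, hrow, hexp]
      push_cast
      omega
    have hcb := κ.cntB_eq_of_pbeta hpb him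
    have h1 := Ptn.cntB_add_cntN k κ i
    have h2 := Ptn.cntH_eq_cntN k κ i
    omega
  · have h1 : κ.row i = 0 := by
      rw [hrow]
      exact gfun_zero k ρ L (Or.inl (by omega))
    rw [Ptn.cntH_zero k κ h1, hzero i (by omega)]

end Construct

lemma core_exists (k : ℕ) (lam : Ptn) (hlam : kBounded k lam) :
    ∃ κ : Ptn, IsCore (k + 1) κ ∧ bdd k κ = lam := by
  set ρ := lam.row with hρ
  set L := lam.length with hL
  have hanti : ∀ a b : ℕ, a ≤ b → ρ b ≤ ρ a := fun a b hab => lam.row_anti hab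
  have hpos : ∀ i, i < L → 0 < ρ i := fun i hi => lam.row_pos_iff.mpr hi
  have hzero : ∀ i, L ≤ i → ρ i = 0 := fun i hi => lam.row_eq_zero hi
  have hk : ∀ i, ρ i ≤ k := by
    intro i
    by_cases hi : i < L
    · exact hlam _ (lam.row_mem_parts hi)
    · rw [hzero i (by omega)]
      exact Nat.zero_le k
  refine ⟨coreC k ρ L, ?_, ?_⟩
  · exact Ptn.isCore_of_closed (coreC_closed hanti hpos hzero hk)
  · apply Ptn.ext_row
    intro i
    rw [Ptn.bdd_row (coreC_closed hanti hpos hzero hk) i]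
    exact coreC_cntH hanti hpos hzero hk i

end KCoreAux7
/-- `c(λ)_j = c(λ)_{j+k+1−λ_j} + λ_j` (stated 0-indexed via `row`). -/
theorem coreOf_row_rec
    (k : ℕ) (hk : 0 < k)
    (lam : Ptn) (hlam : kBounded k lam) (i : ℕ) :
    (coreOf k lam).row i = (coreOf k lam).row (i + (k + 1 - lam.row i)) + lam.row i := by
  have hex := core_exists k lam hlam
  have hspec : IsCore (k + 1) (coreOf k lam) ∧ bdd k (coreOf k lam) = lam :=
    Classical.epsilon_spec hex
  set κ := coreOf k lam with hκ
  have hclosed : Ptn.closedB k κ := Ptn.closed_of_isCore hspec.1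
  have hrow : lam.row i = Ptn.cntH k κ i := by
    conv_lhs => rw [← hspec.2]
    exact Ptn.bdd_row hclosed i
  rw [hrow]
  exact Ptn.row_recursion hclosed i
end

section
/- Let 1 ≤ l ≤ k, let μ be a partition with μ ⊆ R_{k+1−l} and μ_l > 0 (so μ has exactly l positive parts, each at most k+1−l), and let 0 ≤ u ≤ μ_l be an integer. Then for every κ ∈ P^(k): c(κ)/c(μ) is a weak u-strip if and only if μ ⊆ κ, κ/μ is a horizontal strip of size u, and κ_1 ≤ k+1−l. -/
/-!
Common combinatorial background: partitions (as multisets of positive parts),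
Young diagram cells, hook lengths, (k+1)-cores, the bijection `b` from cores to
k-bounded partitions and its inverse `coreOf`, residues, horizontal / weak strips,
removable corners and the statistic `r_{νμ}`, k-rectangles, the ring
Λ^(k) = ℤ[h₁,…,h_k] (modelled as a polynomial ring in k variables, which is
legitimate since h₁,…,h_k are algebraically independent), and the Pieri-type
characterization of the K-k-Schur functions.
-/

noncomputable section

attribute [local instance] Classical.propDecidable

end

namespace Pf

open Ptn

/-- the sorted (decreasing) list of parts -/
def sl (μ : Ptn) : List ℕ := (μ.parts.sort (· ≤ ·)).reverse

lemma sl_coe (μ : Ptn) : (↑(sl μ) : Multiset ℕ) = μ.parts := by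
  simp [sl, Multiset.coe_reverse]

lemma sl_length (μ : Ptn) : (sl μ).length = μ.length := by
  have := congrArg Multiset.card (sl_coe μ); simpa [Ptn.length] using this

lemma sl_sorted (μ : Ptn) : List.Pairwise (· ≥ ·) (sl μ) := by
  have h := Multiset.pairwise_sort μ.parts (· ≤ ·)
  rw [sl, List.pairwise_reverse]
  exact h

lemma row_def (μ : Ptn) (i : ℕ) : μ.row i = (sl μ).getD i 0 := rfl

lemma row_eq_zero (μ : Ptn) {i : ℕ} (h : μ.length ≤ i) : μ.row i = 0 := by
  rw [row_def, List.getD_eq_default]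
  rw [sl_length]; exact h

lemma row_mem (μ : Ptn) {i : ℕ} (h : i < μ.length) : μ.row i ∈ μ.parts := by
  rw [← sl_coe]
  rw [row_def, List.getD_eq_getElem _ _ (by rw [sl_length]; exact h)]
  exact List.getElem_mem _

lemma row_pos (μ : Ptn) {i : ℕ} (h : i < μ.length) : 0 < μ.row i :=
  μ.pos _ (row_mem μ h)

lemma row_anti (μ : Ptn) : ∀ {i j : ℕ}, i ≤ j → μ.row j ≤ μ.row i := by
  intro i j hij
  by_cases hj : j < μ.length
  · have hi : i < μ.length := lt_of_le_of_lt hij hj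
    rcases eq_or_lt_of_le hij with rfl | hlt
    · exact le_refl _
    · rw [row_def, row_def,
        List.getD_eq_getElem _ _ (by rw [sl_length]; exact hj),
        List.getD_eq_getElem _ _ (by rw [sl_length]; exact hi)]
      exact List.pairwise_iff_getElem.mp (sl_sorted μ) _ _ _ _ hlt
  · rw [row_eq_zero μ (le_of_not_gt hj)]; exact Nat.zero_le _

lemma row_pos_iff (μ : Ptn) {i : ℕ} : 0 < μ.row i ↔ i < μ.length := by
  constructor
  · intro h; by_contra hc; rw [row_eq_zero μ (le_of_not_gt hc)] at h; omega
  · exact row_pos μ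

instance : IsAntisymm ℕ (· ≥ ·) := ⟨fun _ _ h1 h2 => le_antisymm h2 h1⟩

lemma sl_eq_of_sorted (μ : Ptn) (L : List ℕ) (hL : List.Pairwise (· ≥ ·) L)
    (h : (↑L : Multiset ℕ) = μ.parts) : sl μ = L := by
  apply List.Perm.eq_of_pairwise' (r := (· ≥ ·)) (sl_sorted μ) hL
  rw [← Multiset.coe_eq_coe, sl_coe, h]

lemma ptn_ext {μ ν : Ptn} (h : μ.parts = ν.parts) : μ = ν := by
  cases μ; cases ν; simpa using h

/-- master lemma: a partition whose parts are given by an antitone function. -/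
lemma row_eq_of_parts (μ : Ptn) (f : ℕ → ℕ) (m : ℕ)
    (hparts : μ.parts = ↑((List.range m).map f))
    (hanti : ∀ i j, i ≤ j → j < m → f j ≤ f i) :
    ∀ i, μ.row i = if i < m then f i else 0 := by
  have hsl : sl μ = (List.range m).map f := by
    apply sl_eq_of_sorted μ _ _ hparts.symm
    rw [List.pairwise_map]
    apply List.Pairwise.imp_of_mem (l := List.range m) _ (List.pairwise_lt_range (n := m))
    intro a b ha hb hab
    exact hanti a b (le_of_lt hab) (List.mem_range.mp hb)
  intro i
  rw [row_def, hsl]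
  by_cases h : i < m
  · rw [List.getD_eq_getElem _ _ (by simpa using h)]
    simp [h]
  · rw [List.getD_eq_default _ _ (by simpa using le_of_not_gt h)]
    simp [h]

lemma parts_eq (μ : Ptn) : μ.parts = ↑((List.range μ.length).map μ.row) := by
  rw [← sl_coe]
  congr 1
  apply List.ext_getElem (by simp [sl_length])
  intro i h1 h2
  simp only [List.getElem_map, List.getElem_range]
  rw [row_def, List.getD_eq_getElem _ _ h1]

lemma col_eq (μ : Ptn) (j : ℕ) :
    μ.col j = ((Finset.range μ.length).filter fun i => j < μ.row i).card := by
  rw [Ptn.col, parts_eq]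
  rw [show ((List.range μ.length).map μ.row : Multiset ℕ) = (Multiset.range μ.length).map μ.row from rfl]
  rw [← Multiset.countP_eq_card_filter, Multiset.countP_map]
  rw [Finset.card_filter]
  simp [Finset.sum_boole, Multiset.countP_eq_card_filter]
  rfl

end Pf
namespace Pf
open Ptn

lemma row_le_size (μ : Ptn) (i : ℕ) : μ.row i ≤ μ.size := by
  by_cases h : i < μ.length
  · exact Multiset.single_le_sum (fun x _ => Nat.zero_le x) _ (row_mem μ h)
  · rw [row_eq_zero μ (le_of_not_gt h)]; exact Nat.zero_le _

lemma length_le_size (μ : Ptn) : μ.length ≤ μ.size := by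
  have : μ.parts.card = (μ.parts.map fun _ => 1).sum := by simp
  rw [Ptn.length, this, Ptn.size]
  calc (μ.parts.map fun _ => 1).sum ≤ (μ.parts.map id).sum := by
        apply Multiset.sum_map_le_sum_map
        intro x hx; exact μ.pos x hx
    _ = μ.parts.sum := by simp

lemma mem_cells (μ : Ptn) (c : ℕ × ℕ) : c ∈ μ.cells ↔ c.2 < μ.row c.1 := by
  constructor
  · intro h; exact (Finset.mem_filter.mp h).2
  · intro h
    have h1 : 0 < μ.row c.1 := lt_of_le_of_lt (Nat.zero_le _) h
    have h2 : c.1 < μ.length := (row_pos_iff μ).mp h1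
    refine Finset.mem_filter.mpr ⟨Finset.mem_product.mpr ⟨?_, ?_⟩, h⟩
    · exact Finset.mem_range.mpr (lt_of_lt_of_le h2 (length_le_size μ))
    · exact Finset.mem_range.mpr (lt_of_lt_of_le h (row_le_size μ c.1))

lemma col_anti (μ : Ptn) {j j' : ℕ} (h : j ≤ j') : μ.col j' ≤ μ.col j := by
  rw [Ptn.col, Ptn.col]
  apply Multiset.card_le_card
  apply Multiset.monotone_filter_right
  intro x hx
  omega

lemma col_ge (μ : Ptn) {i j : ℕ} (h : j < μ.row i) : i + 1 ≤ μ.col j := by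
  have hlen : i < μ.length := (row_pos_iff μ).mp (lt_of_le_of_lt (Nat.zero_le _) h)
  rw [col_eq]
  have hsub : Finset.range (i+1) ⊆ (Finset.range μ.length).filter fun i' => j < μ.row i' := by
    intro x hx
    have hx' : x ≤ i := Nat.lt_succ_iff.mp (Finset.mem_range.mp hx)
    refine Finset.mem_filter.mpr ⟨Finset.mem_range.mpr (lt_of_le_of_lt hx' hlen), ?_⟩
    exact lt_of_lt_of_le h (row_anti μ hx')
  calc i + 1 = (Finset.range (i+1)).card := by simp
    _ ≤ _ := Finset.card_le_card hsub

lemma hook_eq (μ : Ptn) {i j : ℕ} (h : j < μ.row i) :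
    μ.hook (i, j) + (i + j + 1) = μ.row i + μ.col j := by
  have h1 : i + 1 ≤ μ.col j := col_ge μ h
  rw [Ptn.hook]
  simp only
  omega

lemma hook_anti (μ : Ptn) {i j j' : ℕ} (hjj : j ≤ j') (h : j' < μ.row i) :
    μ.hook (i, j') ≤ μ.hook (i, j) := by
  have h2 : j < μ.row i := lt_of_le_of_lt hjj h
  have e1 := hook_eq μ h
  have e2 := hook_eq μ h2
  have h3 : μ.col j' ≤ μ.col j := col_anti μ hjj
  omega

end Pf
namespace Pf
open Ptn

/-- number of cells with hook ≤ k in row i -/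
def cnt (k : ℕ) (μ : Ptn) (i : ℕ) : ℕ :=
  ((Finset.range (μ.row i)).filter fun j => μ.hook (i, j) ≤ k).card

lemma cnt_le_row (k : ℕ) (μ : Ptn) (i : ℕ) : cnt k μ i ≤ μ.row i := by
  calc cnt k μ i ≤ (Finset.range (μ.row i)).card := Finset.card_filter_le _ _
    _ = μ.row i := Finset.card_range _

lemma small_eq_Ico (k : ℕ) (μ : Ptn) (i : ℕ) :
    ((Finset.range (μ.row i)).filter fun j => μ.hook (i, j) ≤ k) =
      Finset.Ico (μ.row i - cnt k μ i) (μ.row i) := by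
  set S := (Finset.range (μ.row i)).filter fun j => μ.hook (i, j) ≤ k with hS
  have hsub : S ⊆ Finset.range (μ.row i) := Finset.filter_subset _ _
  have hup : ∀ j ∈ S, ∀ j', j ≤ j' → j' < μ.row i → j' ∈ S := by
    intro j hj j' hle hlt
    have hj2 := Finset.mem_filter.mp hj
    refine Finset.mem_filter.mpr ⟨Finset.mem_range.mpr hlt, ?_⟩
    exact le_trans (hook_anti μ hle hlt) hj2.2
  by_cases hne : S = ∅
  · have hcnt : cnt k μ i = 0 := by rw [cnt, ← hS, hne]; simp
    rw [hne, hcnt, Nat.sub_zero, Finset.Ico_self]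
  · have hnonempty : S.Nonempty := Finset.nonempty_iff_ne_empty.mpr hne
    set a := S.min' hnonempty with ha
    have hSeq : S = Finset.Ico a (μ.row i) := by
      apply Finset.Subset.antisymm
      · intro x hx
        exact Finset.mem_Ico.mpr ⟨S.min'_le x hx, Finset.mem_range.mp (hsub hx)⟩
      · intro x hx
        rcases Finset.mem_Ico.mp hx with ⟨h1, h2⟩
        exact hup a (S.min'_mem hnonempty) x h1 h2
    have hcard : cnt k μ i = μ.row i - a := by
      rw [cnt, ← hS, hSeq, Nat.card_Ico]
    have haro : a < μ.row i := Finset.mem_range.mp (hsub (S.min'_mem hnonempty))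
    rw [hSeq, hcard]
    congr 1
    omega

lemma mem_small_iff (k : ℕ) (μ : Ptn) (i j : ℕ) (hj : j < μ.row i) :
    μ.hook (i, j) ≤ k ↔ μ.row i - cnt k μ i ≤ j := by
  have := small_eq_Ico k μ i
  constructor
  · intro h
    have : j ∈ Finset.Ico (μ.row i - cnt k μ i) (μ.row i) := by
      rw [← this]; exact Finset.mem_filter.mpr ⟨Finset.mem_range.mpr hj, h⟩
    exact (Finset.mem_Ico.mp this).1
  · intro h
    have h2 : j ∈ (Finset.range (μ.row i)).filter fun j => μ.hook (i, j) ≤ k := by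
      rw [small_eq_Ico]; exact Finset.mem_Ico.mpr ⟨h, hj⟩
    exact (Finset.mem_filter.mp h2).2

lemma coreSize_eq (k : ℕ) (μ : Ptn) :
    coreSize k μ = ∑ i ∈ Finset.range μ.length, cnt k μ i := by
  rw [coreSize]
  have heq : μ.cells.filter (fun c => μ.hook c ≤ k) =
      (Finset.range μ.length).biUnion (fun i =>
        ((Finset.range (μ.row i)).filter fun j => μ.hook (i, j) ≤ k).image fun j => (i, j)) := by
    ext c
    simp only [Finset.mem_filter, Finset.mem_biUnion, Finset.mem_image, Finset.mem_range,
      mem_cells]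
    constructor
    · rintro ⟨h1, h2⟩
      refine ⟨c.1, (row_pos_iff μ).mp (lt_of_le_of_lt (Nat.zero_le _) h1), c.2, ⟨h1, ?_⟩, rfl⟩
      rwa [Prod.mk.eta]
    · rintro ⟨i, hi, j, ⟨hj1, hj2⟩, rfl⟩
      exact ⟨hj1, hj2⟩
  rw [heq, Finset.card_biUnion]
  · apply Finset.sum_congr rfl
    intro i _
    rw [Finset.card_image_of_injective _ (fun a b (h : (i,a) = (i,b)) => (Prod.ext_iff.mp h).2)]
    rfl
  · intro i _ i' _ hne
    simp only [Finset.disjoint_left, Finset.mem_image]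
    rintro a ⟨j, _, rfl⟩ ⟨j', _, h⟩
    apply hne
    exact ((Prod.ext_iff.mp h).1).symm

lemma anti_of_step {f : ℕ → ℕ} (h : ∀ i, f (i+1) ≤ f i) : ∀ {i j}, i ≤ j → f j ≤ f i := by
  intro i j hij
  induction hij with
  | refl => exact le_refl _
  | step _ ih => exact le_trans (h _) ih

lemma cnt_of_ge (k : ℕ) (μ : Ptn) {i : ℕ} (h : μ.length ≤ i) : cnt k μ i = 0 := by
  rw [cnt, row_eq_zero μ h]; simp

lemma lt_row_of_lt_col (μ : Ptn) {i j : ℕ} (h : i < μ.col j) : j < μ.row i := by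
  by_contra hc
  push_neg at hc
  have hsub : ((Finset.range μ.length).filter fun i' => j < μ.row i') ⊆ Finset.range i := by
    intro x hx
    rcases Finset.mem_filter.mp hx with ⟨_, h2⟩
    rw [Finset.mem_range]
    by_contra hx2
    have := row_anti μ (le_of_not_gt hx2)
    omega
  rw [col_eq] at h
  have := Finset.card_le_card hsub
  rw [Finset.card_range] at this
  omega

lemma core_cnt_pos {k : ℕ} {κ : Ptn} (hcore : IsCore (k+1) κ) {i : ℕ} (hi : i < κ.length) :
    1 ≤ cnt k κ i := by
  set j0 := κ.row i - 1 with hj0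
  have hrow : 0 < κ.row i := row_pos κ hi
  have hj0row : j0 < κ.row i := by omega
  have hcell : ((i, j0) : ℕ × ℕ) ∈ κ.cells := (mem_cells κ _).mpr hj0row
  have hhook : κ.hook (i, j0) ≤ k := by
    by_contra hc
    push_neg at hc
    have hne := hcore _ hcell
    have hc2 : k + 2 ≤ κ.hook (i, j0) := by omega
    have he := hook_eq κ hj0row
    -- hook = col j0 - i, so col j0 ≥ i + k + 2
    have hcol : i + k + 2 ≤ κ.col j0 := by omega
    set C := κ.col j0 with hC
    set i'' := C - (k+1) with hi''
    have hi''C : i'' < C := by omega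
    have hrow'' : j0 < κ.row i'' := lt_row_of_lt_col κ hi''C
    have hii'' : i < i'' := by omega
    have hrow''le : κ.row i'' ≤ κ.row i := row_anti κ (le_of_lt hii'')
    have hroweq : κ.row i'' = κ.row i := by omega
    have hcell'' : ((i'', j0) : ℕ × ℕ) ∈ κ.cells := (mem_cells κ _).mpr hrow''
    have he'' := hook_eq κ hrow''
    have : κ.hook (i'', j0) = k + 1 := by omega
    exact hcore _ hcell'' this
  have : j0 ∈ (Finset.range (κ.row i)).filter fun j => κ.hook (i, j) ≤ k :=
    Finset.mem_filter.mpr ⟨Finset.mem_range.mpr hj0row, hhook⟩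
  have := Finset.card_pos.mpr ⟨j0, this⟩
  exact this

lemma core_cnt_anti {k : ℕ} {κ : Ptn} (hcore : IsCore (k+1) κ) (i : ℕ) :
    cnt k κ (i+1) ≤ cnt k κ i := by
  by_cases hlen : i + 1 < κ.length
  · set r1 := κ.row i with hr1
    set r2 := κ.row (i+1) with hr2
    have hr21 : r2 ≤ r1 := row_anti κ (by omega)
    set Δ := r1 - r2 with hΔ
    rw [cnt, cnt]
    apply Finset.card_le_card_of_injOn (fun j => j + Δ)
    · intro j hj
      rcases Finset.mem_filter.mp hj with ⟨hjr, hjs⟩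
      rw [Finset.mem_range] at hjr
      have hjr1 : j + Δ < r1 := by omega
      refine Finset.mem_filter.mpr ⟨Finset.mem_range.mpr hjr1, ?_⟩
      have e1 := hook_eq κ (show j + Δ < κ.row i from hjr1)
      have e2 := hook_eq κ (show j < κ.row (i+1) from hjr)
      have hcol : κ.col (j + Δ) ≤ κ.col j := col_anti κ (by omega)
      have hcell : ((i, j + Δ) : ℕ × ℕ) ∈ κ.cells := (mem_cells κ _).mpr hjr1
      have hne := hcore _ hcell
      beta_reduce
      omega
    · intro a _ b _ hab
      have : a + Δ = b + Δ := hab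
      omega
  · rw [cnt_of_ge k κ (le_of_not_gt hlen)]
    exact Nat.zero_le _

end Pf
namespace Pf
open Ptn

lemma size_eq (μ : Ptn) : μ.size = ∑ i ∈ Finset.range μ.length, μ.row i := by
  rw [Ptn.size]
  conv_lhs => rw [parts_eq μ]
  rw [Multiset.sum_coe]
  rw [← Multiset.sum_coe, ← Multiset.map_coe]
  rfl

lemma ptn_eq_of_row_eq (μ ν : Ptn) (h : ∀ i, μ.row i = ν.row i) : μ = ν := by
  have hiff : ∀ i, i < μ.length ↔ i < ν.length := by
    intro i; rw [← row_pos_iff, ← row_pos_iff, h]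
  have hlen : μ.length = ν.length := by
    by_contra hne
    rcases Nat.lt_or_ge μ.length ν.length with h1 | h1
    · exact absurd ((hiff _).mpr h1) (by omega)
    · rcases Nat.lt_or_ge ν.length μ.length with h2 | h2
      · exact absurd ((hiff _).mp h2) (by omega)
      · omega
  apply ptn_ext
  rw [parts_eq μ, parts_eq ν, hlen]
  congr 1
  apply List.map_congr_left
  intro a _
  exact h a

lemma col_le_length (μ : Ptn) (j : ℕ) : μ.col j ≤ μ.length := by
  rw [col_eq]
  calc _ ≤ (Finset.range μ.length).card := Finset.card_filter_le _ _
    _ = μ.length := Finset.card_range _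

lemma col_zero (μ : Ptn) : μ.col 0 = μ.length := by
  apply le_antisymm (col_le_length μ 0)
  rw [col_eq]
  apply le_trans (le_of_eq (Finset.card_range μ.length).symm)
  apply Finset.card_le_card
  intro x hx
  exact Finset.mem_filter.mpr ⟨hx, row_pos μ (Finset.mem_range.mp hx)⟩

lemma bdd_parts {k : ℕ} {κ : Ptn} (hcore : IsCore (k+1) κ) :
    (bdd k κ).parts = ↑((List.range κ.length).map (cnt k κ)) := by
  show ((Multiset.range κ.length).map _).filter _ = _
  rw [Multiset.filter_eq_self.mpr]
  · rfl
  · intro x hx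
    rcases Multiset.mem_map.mp hx with ⟨i, hi, rfl⟩
    rw [Multiset.mem_range] at hi
    exact core_cnt_pos hcore hi

lemma bdd_row {k : ℕ} {κ : Ptn} (hcore : IsCore (k+1) κ) (i : ℕ) :
    (bdd k κ).row i = if i < κ.length then cnt k κ i else 0 := by
  apply row_eq_of_parts _ _ _ (bdd_parts hcore)
  intro a b hab _
  exact anti_of_step (core_cnt_anti hcore) hab

lemma bdd_length {k : ℕ} {κ : Ptn} (hcore : IsCore (k+1) κ) :
    (bdd k κ).length = κ.length := by
  rw [Ptn.length, bdd_parts hcore]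
  simp

lemma bdd_size {k : ℕ} {κ : Ptn} (hcore : IsCore (k+1) κ) :
    (bdd k κ).size = coreSize k κ := by
  rw [size_eq, coreSize_eq, bdd_length hcore]
  apply Finset.sum_congr rfl
  intro i hi
  rw [bdd_row hcore, if_pos (Finset.mem_range.mp hi)]

/-- big cell just left of the small region forces a large column -/
lemma core_bigcell {k : ℕ} {κ : Ptn} (hcore : IsCore (k+1) κ) {i : ℕ} (hi : i < κ.length)
    (hB : cnt k κ i < κ.row i) :
    k + 2 + i ≤ cnt k κ i + κ.col (κ.row i - cnt k κ i - 1) := by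
  set B := κ.row i - cnt k κ i with hBdef
  have hB1 : B - 1 < κ.row i := by omega
  have hnotsmall : ¬ (κ.hook (i, B - 1) ≤ k) := by
    rw [mem_small_iff k κ i _ hB1]
    omega
  have hne := hcore (i, B-1) ((mem_cells κ (i, B-1)).mpr hB1)
  have he := hook_eq κ hB1
  have hcnt := cnt_le_row k κ i
  omega

/-- the first small cell gives an upper bound involving its column -/
lemma core_small_first {k : ℕ} {κ : Ptn} (hi : i < κ.length)
    (hcnt : 0 < cnt k κ i) :
    cnt k κ i + κ.col (κ.row i - cnt k κ i) ≤ k + i + 1 := by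
  set B := κ.row i - cnt k κ i with hBdef
  have hrow := cnt_le_row k κ i
  have hB1 : B < κ.row i := by omega
  have hsmall : κ.hook (i, B) ≤ k := by
    rw [mem_small_iff k κ i _ hB1]
  have he := hook_eq κ hB1
  omega

end Pf
namespace Pf
open Ptn

attribute [local instance] Classical.propDecidable

section construction

variable (k : ℕ) (lam : Ptn)

/-- the shift predicate: at row `i`, shift `p` is admissible for row assignment `g` -/
def stepP (m : ℕ) (r : ℕ → ℕ) (g : ℕ → ℕ) (i p : ℕ) : Prop :=
  ((Finset.Ico (i+1) m).filter fun j => p < g j).card ≤ k - r i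

lemma stepP_ex (m : ℕ) (r g : ℕ → ℕ) (i : ℕ) : ∃ p, stepP k m r g i p := by
  refine ⟨(Finset.Ico (i+1) m).sup g, ?_⟩
  have : ((Finset.Ico (i+1) m).filter fun j => (Finset.Ico (i+1) m).sup g < g j) = ∅ := by
    apply Finset.filter_false_of_mem
    intro j hj
    exact not_lt_of_ge (Finset.le_sup hj)
  rw [stepP, this]
  simp

noncomputable def stepRow (m : ℕ) (r g : ℕ → ℕ) (i : ℕ) : ℕ :=
  r i + Nat.find (stepP_ex k m r g i)

lemma find_congr' {p q : ℕ → Prop} [DecidablePred p] [DecidablePred q]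
    (hpq : ∀ n, p n ↔ q n) (hp : ∃ n, p n) (hq : ∃ n, q n) :
    Nat.find hp = Nat.find hq := by
  apply le_antisymm
  · exact Nat.find_le ((hpq _).mpr (Nat.find_spec hq))
  · exact Nat.find_le ((hpq _).mp (Nat.find_spec hp))

lemma stepRow_congr (m : ℕ) (r g g' : ℕ → ℕ) (i : ℕ)
    (h : ∀ j, i + 1 ≤ j → j < m → g j = g' j) :
    stepRow k m r g i = stepRow k m r g' i := by
  rw [stepRow, stepRow]
  congr 1
  apply find_congr'
  intro p
  rw [stepP, stepP]
  have : ((Finset.Ico (i+1) m).filter fun j => p < g j) =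
      ((Finset.Ico (i+1) m).filter fun j => p < g' j) := by
    apply Finset.filter_congr
    intro j hj
    rcases Finset.mem_Ico.mp hj with ⟨h1, h2⟩
    rw [h j h1 h2]
  rw [this]

/-- build the rows from the bottom up -/
noncomputable def cAux (m : ℕ) (r : ℕ → ℕ) : ℕ → ℕ → ℕ
  | 0 => fun _ => 0
  | (t+1) => fun i => if i = m - t - 1 then stepRow k m r (cAux m r t) i else cAux m r t i

lemma cAux_stable (m : ℕ) (r : ℕ → ℕ) {t t' : ℕ} (htt : t ≤ t') (ht' : t' ≤ m) :
    ∀ j, m - t ≤ j → cAux k m r t' j = cAux k m r t j := by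
  induction t' with
  | zero => intro j hj; rw [Nat.le_zero.mp htt]
  | succ s ih =>
    intro j hj
    rcases Nat.lt_or_ge t (s+1) with hlt | hge
    · have hts : t ≤ s := by omega
      have hs : s ≤ m := by omega
      rw [show cAux k m r (s+1) j = if j = m - s - 1 then stepRow k m r (cAux k m r s) j
          else cAux k m r s j from rfl]
      rw [if_neg (by omega)]
      exact ih hts hs j hj
    · have : t = s + 1 := by omega
      rw [this]

lemma cAux_zero_of_ge (m : ℕ) (r : ℕ → ℕ) {t : ℕ} (ht : t ≤ m) :
    ∀ j, m ≤ j → cAux k m r t j = 0 := by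
  induction t with
  | zero => intro j hj; rfl
  | succ s ih =>
    intro j hj
    rw [show cAux k m r (s+1) j = if j = m - s - 1 then stepRow k m r (cAux k m r s) j
        else cAux k m r s j from rfl]
    rw [if_neg (by omega)]
    exact ih (by omega) j hj

/-- the row lengths of the core of `lam` -/
noncomputable def cRow : ℕ → ℕ := cAux k lam.length lam.row lam.length

lemma cRow_zero {i : ℕ} (hi : lam.length ≤ i) : cRow k lam i = 0 :=
  cAux_zero_of_ge k lam.length lam.row (le_refl _) i hi

lemma cRow_eq {i : ℕ} (hi : i < lam.length) :
    cRow k lam i = stepRow k lam.length lam.row (cRow k lam) i := by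
  set m := lam.length with hm
  set r := lam.row with hr
  have h1 : cRow k lam i = cAux k m r (m - i) i := by
    rw [cRow]
    exact cAux_stable k m r (show m - i ≤ m by omega) (le_refl m) i (by omega)
  have h2 : m - i = (m - i - 1) + 1 := by omega
  rw [h1, h2]
  rw [show cAux k m r ((m - i - 1) + 1) i = if i = m - (m - i - 1) - 1 then
      stepRow k m r (cAux k m r (m - i - 1)) i else cAux k m r (m - i - 1) i from rfl]
  rw [if_pos (by omega)]
  apply stepRow_congr
  intro j hj1 hj2
  rw [cRow]
  exact (cAux_stable k m r (show m - i - 1 ≤ m by omega) (le_refl m) j (by omega)).symm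

/-- the defining minimality predicate, in terms of `cRow` itself -/
def cP (i p : ℕ) : Prop :=
  ((Finset.Ico (i+1) lam.length).filter fun j => p < cRow k lam j).card ≤ k - lam.row i

lemma cP_ex (i : ℕ) : ∃ p, cP k lam i p := stepP_ex k lam.length lam.row (cRow k lam) i

lemma cRow_def {i : ℕ} (hi : i < lam.length) :
    cRow k lam i = lam.row i + Nat.find (cP_ex k lam i) := by
  rw [cRow_eq k lam hi, stepRow]
  congr 1

lemma cRow_ge {i : ℕ} (hi : i < lam.length) : lam.row i ≤ cRow k lam i := by
  rw [cRow_def k lam hi]; omega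

lemma cRow_big {i : ℕ} (hi : i < lam.length) : cP k lam i (cRow k lam i - lam.row i) := by
  have h := cRow_def k lam hi
  have := Nat.find_spec (cP_ex k lam i)
  rw [show cRow k lam i - lam.row i = Nat.find (cP_ex k lam i) by omega]
  exact this

lemma cRow_min {i : ℕ} (hi : i < lam.length) {q : ℕ} (hq : q < cRow k lam i - lam.row i) :
    ¬ cP k lam i q := by
  have h := cRow_def k lam hi
  exact Nat.find_min (cP_ex k lam i) (by omega)

lemma cRow_anti (i : ℕ) : cRow k lam (i+1) ≤ cRow k lam i := by
  by_cases hlen : i + 1 < lam.length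
  · have hi : i < lam.length := by omega
    by_contra hc
    push_neg at hc
    -- q := cRow i - row i  satisfies cP but q + row i < cRow (i+1)
    set q := cRow k lam i - lam.row i with hqdef
    have hq1 : q + lam.row i < cRow k lam (i+1) := by
      have := cRow_ge k lam hi
      omega
    have hcp : cP k lam i q := cRow_big k lam hi
    -- show ¬ cP k lam i q
    have hr : lam.row (i+1) ≤ lam.row i := row_anti lam (by omega)
    have hq2 : q < cRow k lam (i+1) - lam.row (i+1) := by
      have := cRow_ge k lam hlen
      omega
    have hnc := cRow_min k lam hlen hq2
    rw [cP] at hnc hcp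
    push_neg at hnc
    -- the filter over Ico (i+1) m contains i+1 and the filter over Ico (i+2) m
    have hsub : insert (i+1) ((Finset.Ico (i+1+1) lam.length).filter fun j => q < cRow k lam j) ⊆
        ((Finset.Ico (i+1) lam.length).filter fun j => q < cRow k lam j) := by
      intro x hx
      rcases Finset.mem_insert.mp hx with rfl | hx2
      · exact Finset.mem_filter.mpr ⟨Finset.mem_Ico.mpr ⟨le_refl _, hlen⟩, by omega⟩
      · rcases Finset.mem_filter.mp hx2 with ⟨hx3, hx4⟩
        rcases Finset.mem_Ico.mp hx3 with ⟨h5, h6⟩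
        exact Finset.mem_filter.mpr ⟨Finset.mem_Ico.mpr ⟨by omega, h6⟩, hx4⟩
    have hnotmem : i + 1 ∉ (Finset.Ico (i+1+1) lam.length).filter fun j => q < cRow k lam j := by
      intro hmem
      have := (Finset.mem_Ico.mp (Finset.mem_filter.mp hmem).1).1
      omega
    have hcard := Finset.card_le_card hsub
    rw [Finset.card_insert_of_notMem hnotmem] at hcard
    omega
  · rw [cRow_zero k lam (le_of_not_gt hlen)]
    exact Nat.zero_le _

end construction

end Pf
namespace Pf
open Ptn

attribute [local instance] Classical.propDecidable

variable (k : ℕ) (lam : Ptn)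

lemma cRow_anti' : ∀ {a b : ℕ}, a ≤ b → cRow k lam b ≤ cRow k lam a :=
  fun h => anti_of_step (cRow_anti k lam) h

lemma cRow_pos {i : ℕ} (hi : i < lam.length) : 0 < cRow k lam i :=
  lt_of_lt_of_le (row_pos lam hi) (cRow_ge k lam hi)

/-- the constructed `(k+1)`-core of `lam` -/
noncomputable def theCore : Ptn :=
  ⟨↑((List.range lam.length).map (cRow k lam)), by
    intro x hx
    rw [Multiset.mem_coe, List.mem_map] at hx
    rcases hx with ⟨i, hi, rfl⟩
    exact cRow_pos k lam (List.mem_range.mp hi)⟩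

lemma theCore_row (i : ℕ) : (theCore k lam).row i = cRow k lam i := by
  have h := row_eq_of_parts (theCore k lam) (cRow k lam) lam.length rfl
    (fun a b hab _ => cRow_anti' k lam hab)
  rw [h]
  by_cases hi : i < lam.length
  · rw [if_pos hi]
  · rw [if_neg hi, cRow_zero k lam (le_of_not_gt hi)]

lemma theCore_length : (theCore k lam).length = lam.length := by
  show Multiset.card _ = _
  simp [theCore]

/-- the number of deeper rows reaching beyond column `j` -/
noncomputable def Dcard (i j : ℕ) : ℕ :=
  ((Finset.Ico (i+1) lam.length).filter fun j' => j < cRow k lam j').card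

lemma theCore_col {i j : ℕ} (hi : i < lam.length) (hj : j < cRow k lam i) :
    (theCore k lam).col j = (i + 1) + Dcard k lam i j := by
  rw [col_eq, theCore_length]
  have hsplit : Finset.range lam.length = Finset.range (i+1) ∪ Finset.Ico (i+1) lam.length := by
    rw [Finset.range_eq_Ico, Finset.range_eq_Ico]
    rw [Finset.Ico_union_Ico_eq_Ico (Nat.zero_le _) (by omega)]
  rw [hsplit, Finset.filter_union, Finset.card_union_of_disjoint]
  · congr 1
    · rw [Finset.filter_true_of_mem, Finset.card_range]
      intro x hx
      rw [Finset.mem_range] at hx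
      rw [theCore_row]
      have hx' : x ≤ i := by omega
      exact lt_of_lt_of_le hj (cRow_anti' k lam hx')
    · rw [Dcard]
      apply Finset.card_bij (fun a _ => a) <;> simp [theCore_row]
  · apply Finset.disjoint_filter_filter
    rw [Finset.range_eq_Ico]
    apply Finset.Ico_disjoint_Ico_consecutive

lemma Dcard_anti {i : ℕ} {j j' : ℕ} (h : j ≤ j') : Dcard k lam i j' ≤ Dcard k lam i j := by
  apply Finset.card_le_card
  apply Finset.monotone_filter_right
  intro x hx
  omega

lemma theCore_hook_small {i j : ℕ} (hb : lam.row i ≤ k) (hi : i < lam.length)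
    (hj : j < cRow k lam i) (hjp : cRow k lam i - lam.row i ≤ j) :
    (theCore k lam).hook (i, j) ≤ k := by
  have hrowlt : j < (theCore k lam).row i := by rwa [theCore_row]
  have he := hook_eq (theCore k lam) hrowlt
  rw [theCore_row, theCore_col k lam hi hj] at he
  have hD : Dcard k lam i j ≤ k - lam.row i := by
    have h1 : Dcard k lam i j ≤ Dcard k lam i (cRow k lam i - lam.row i) :=
      Dcard_anti k lam hjp
    have h2 := cRow_big k lam hi
    rw [cP] at h2
    exact le_trans h1 h2
  have := cRow_ge k lam hi
  omega

lemma theCore_hook_big {i j : ℕ} (hb : lam.row i ≤ k) (hi : i < lam.length)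
    (hj : j < cRow k lam i - lam.row i) :
    k + 2 ≤ (theCore k lam).hook (i, j) := by
  have hj2 : j < cRow k lam i := by have := cRow_ge k lam hi; omega
  have hrowlt : j < (theCore k lam).row i := by rwa [theCore_row]
  have he := hook_eq (theCore k lam) hrowlt
  rw [theCore_row, theCore_col k lam hi hj2] at he
  have hD : k - lam.row i < Dcard k lam i j := by
    have := cRow_min k lam hi hj
    rw [cP] at this
    exact lt_of_not_ge this
  have := cRow_ge k lam hi
  omega

lemma theCore_isCore (hb : kBounded k lam) : IsCore (k+1) (theCore k lam) := by
  intro c hc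
  rcases c with ⟨i, j⟩
  have hj : j < (theCore k lam).row i := (mem_cells _ _).mp hc
  rw [theCore_row] at hj
  have hi : i < lam.length := by
    have : 0 < cRow k lam i := by omega
    by_contra hcon
    rw [cRow_zero k lam (le_of_not_gt hcon)] at this
    omega
  have hbk : lam.row i ≤ k := hb _ (row_mem lam hi)
  intro heq
  rcases Nat.lt_or_ge j (cRow k lam i - lam.row i) with h1 | h1
  · have := theCore_hook_big k lam hbk hi h1
    omega
  · have := theCore_hook_small k lam hbk hi hj h1
    omega

lemma theCore_cnt (hb : kBounded k lam) {i : ℕ} (hi : i < lam.length) :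
    cnt k (theCore k lam) i = lam.row i := by
  have hbk : lam.row i ≤ k := hb _ (row_mem lam hi)
  rw [cnt]
  have : ((Finset.range ((theCore k lam).row i)).filter fun j => (theCore k lam).hook (i, j) ≤ k)
      = Finset.Ico (cRow k lam i - lam.row i) (cRow k lam i) := by
    ext j
    rw [Finset.mem_filter, Finset.mem_range, Finset.mem_Ico, theCore_row]
    constructor
    · rintro ⟨h1, h2⟩
      refine ⟨?_, h1⟩
      by_contra hcon
      push_neg at hcon
      have := theCore_hook_big k lam hbk hi hcon
      omega
    · rintro ⟨h1, h2⟩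
      exact ⟨h2, theCore_hook_small k lam hbk hi h2 h1⟩
  rw [this, Nat.card_Ico]
  have := cRow_ge k lam hi
  omega

lemma theCore_bdd (hb : kBounded k lam) : bdd k (theCore k lam) = lam := by
  apply ptn_ext
  rw [bdd_parts (theCore_isCore k lam hb), theCore_length]
  rw [parts_eq lam]
  congr 1
  apply List.map_congr_left
  intro a ha
  exact theCore_cnt k lam hb (List.mem_range.mp ha)

theorem exists_core (hb : kBounded k lam) : ∃ κ, IsCore (k+1) κ ∧ bdd k κ = lam :=
  ⟨theCore k lam, theCore_isCore k lam hb, theCore_bdd k lam hb⟩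

theorem coreOf_spec (hb : kBounded k lam) :
    IsCore (k+1) (coreOf k lam) ∧ bdd k (coreOf k lam) = lam :=
  Classical.epsilon_spec (exists_core k lam hb)

end Pf
namespace Pf
open Ptn

/-- horizontal strip: row `i` of the bigger shape is at most row `i-1` of the smaller -/
lemma hs_row_succ {τ κ : Ptn} (h : IsHS τ κ) {i : ℕ} (hi : 1 ≤ i) :
    κ.row i ≤ τ.row (i-1) := by
  by_contra hc
  push_neg at hc
  set j := τ.row (i-1) with hj
  have hcolκ : i + 1 ≤ κ.col j := col_ge κ hc
  have hcolτ : τ.col j ≤ i - 1 := by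
    rw [col_eq]
    have hsub : ((Finset.range τ.length).filter fun i' => j < τ.row i') ⊆
        Finset.range (i-1) := by
      intro x hx
      rcases Finset.mem_filter.mp hx with ⟨_, h2⟩
      rw [Finset.mem_range]
      by_contra hx2
      have := row_anti τ (le_of_not_gt hx2)
      omega
    calc _ ≤ (Finset.range (i-1)).card := Finset.card_le_card hsub
      _ = i - 1 := Finset.card_range _
  have := h.2 j
  omega

lemma col_mono {μ κ : Ptn} (h : ∀ i, μ.row i ≤ κ.row i) (j : ℕ) : μ.col j ≤ κ.col j := by
  rw [col_eq, col_eq]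
  apply Finset.card_le_card
  intro x hx
  rcases Finset.mem_filter.mp hx with ⟨hx1, hx2⟩
  have h3 : j < κ.row x := lt_of_lt_of_le hx2 (h x)
  refine Finset.mem_filter.mpr ⟨Finset.mem_range.mpr ?_, h3⟩
  exact (row_pos_iff κ).mp (lt_of_le_of_lt (Nat.zero_le _) h3)

/-- THE STRUCTURE LEMMA: a `(k+1)`-core whose bounded partition fits suitably in the
rectangle has explicitly described rows. -/
lemma core_struct {k l : ℕ} (hl1 : 1 ≤ l) (hlk : l ≤ k) {ν τ : Ptn}
    (hcore : IsCore (k+1) τ) (hbdd : bdd k τ = ν)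
    (hν1 : ν.row 0 ≤ k + 1 - l) (hνlen : ν.length ≤ l + 1) :
    (∀ i, 1 ≤ i → τ.row i = ν.row i) ∧
    (τ.row 0 = ν.row 0 +
      (if ν.length = l + 1 ∧ ν.row 0 = k + 1 - l then ν.row l else 0)) := by
  have hlen : τ.length = ν.length := by rw [← hbdd, bdd_length hcore]
  have hcnt : ∀ i, i < τ.length → cnt k τ i = ν.row i := by
    intro i hi
    have := bdd_row hcore i
    rw [hbdd, if_pos hi] at this
    exact this.symm
  have hνrow : ∀ i, ν.row i ≤ k + 1 - l := fun i => le_trans (row_anti ν (Nat.zero_le i)) hν1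
  have hcoltot : ∀ j, τ.col j ≤ l + 1 := fun j => le_trans (col_le_length τ j) (by omega)
  -- rows i ≥ 1 have no big cells
  have hrows : ∀ i, 1 ≤ i → τ.row i = ν.row i := by
    intro i hi1
    by_cases hi : i < τ.length
    · rcases Nat.lt_or_ge (cnt k τ i) (τ.row i) with hlt | hge
      · exfalso
        have hbig := core_bigcell hcore hi hlt
        have h1 := hcnt i hi
        have h2 := hνrow i
        have h3 := hcoltot (τ.row i - cnt k τ i - 1)
        omega
      · have := cnt_le_row k τ i
        rw [← hcnt i hi]
        omega
    · rw [row_eq_zero τ (le_of_not_gt hi), row_eq_zero ν (by omega)]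
  refine ⟨hrows, ?_⟩
  by_cases hM0 : τ.length = 0
  · have hne : ¬ (ν.length = l + 1 ∧ ν.row 0 = k + 1 - l) := by
      rintro ⟨h1, _⟩; omega
    rw [row_eq_zero τ (by omega), if_neg hne, row_eq_zero ν (by omega)]
  have h0len : 0 < τ.length := by omega
  have hcnt0 := hcnt 0 h0len
  have hcntle := cnt_le_row k τ 0
  rcases Nat.lt_or_ge (cnt k τ 0) (τ.row 0) with hlt | hge
  · -- B > 0
    have hbig := core_bigcell hcore h0len hlt
    have hcolbig : k + 2 ≤ ν.row 0 + τ.col (τ.row 0 - cnt k τ 0 - 1) := by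
      rw [← hcnt0]; omega
    have hcolB1 : l + 1 ≤ τ.col (τ.row 0 - cnt k τ 0 - 1) := by
      have := hν1; omega
    have hMeq : τ.length = l + 1 :=
      le_antisymm (by omega) (le_trans hcolB1 (col_le_length τ _))
    have hν0 : ν.row 0 = k + 1 - l := by
      have := hcoltot (τ.row 0 - cnt k τ 0 - 1); omega
    have hll : l < τ.length := by omega
    have hτl : τ.row l = ν.row l := hrows l hl1
    -- B ≤ ν.row l
    have hBle : τ.row 0 - cnt k τ 0 ≤ ν.row l := by
      by_contra hc
      push_neg at hc
      have hcol_le : τ.col (τ.row 0 - cnt k τ 0 - 1) ≤ l := by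
        rw [col_eq]
        have hsub : ((Finset.range τ.length).filter
            fun i' => τ.row 0 - cnt k τ 0 - 1 < τ.row i') ⊆ Finset.range l := by
          intro x hx
          rcases Finset.mem_filter.mp hx with ⟨_, h2⟩
          rw [Finset.mem_range]
          by_contra hx2
          have h3 : τ.row x ≤ τ.row l := row_anti τ (le_of_not_gt hx2)
          omega
        calc _ ≤ (Finset.range l).card := Finset.card_le_card hsub
          _ = l := Finset.card_range _
      omega
    -- B ≥ ν.row l
    have hBge : ν.row l ≤ τ.row 0 - cnt k τ 0 := by
      by_contra hc
      push_neg at hc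
      have hcpos : 0 < cnt k τ 0 := core_cnt_pos hcore h0len
      have hsmall := core_small_first (κ := τ) h0len hcpos
      have hcolge : l + 1 ≤ τ.col (τ.row 0 - cnt k τ 0) := by
        rw [col_eq]
        have hsub : Finset.range (l+1) ⊆
            ((Finset.range τ.length).filter fun i' => τ.row 0 - cnt k τ 0 < τ.row i') := by
          intro x hx
          rw [Finset.mem_range] at hx
          refine Finset.mem_filter.mpr ⟨Finset.mem_range.mpr (by omega), ?_⟩
          have : τ.row l ≤ τ.row x := row_anti τ (by omega)
          omega
        calc l + 1 = (Finset.range (l+1)).card := (Finset.card_range _).symm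
          _ ≤ _ := Finset.card_le_card hsub
      omega
    rw [if_pos ⟨by omega, hν0⟩, ← hcnt0]
    omega
  · -- B = 0
    have hτ0 : τ.row 0 = ν.row 0 := by rw [← hcnt0]; omega
    by_cases hif : ν.length = l + 1 ∧ ν.row 0 = k + 1 - l
    · exfalso
      rcases hif with ⟨hif1, hif2⟩
      have hll : l < τ.length := by omega
      have hτl : τ.row l = ν.row l := hrows l hl1
      have hνl : 0 < ν.row l := by
        have := row_pos ν (by omega : l < ν.length)
        omega
      have hcpos : 0 < cnt k τ 0 := core_cnt_pos hcore h0len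
      have hsmall := core_small_first (κ := τ) h0len hcpos
      have hcol0 : τ.col (τ.row 0 - cnt k τ 0) = l + 1 := by
        have h9 : τ.row 0 - cnt k τ 0 = 0 := by omega
        rw [h9, col_zero, hlen, hif1]
      omega
    · rw [if_neg hif]
      omega

end Pf
namespace Pf
open Ptn

attribute [local instance] Classical.propDecidable

lemma skew_int (μ κ : Ptn) :
    (skewCells μ κ).image (fun c : ℕ × ℕ => ((c.2 : ℤ) - c.1)) =
      (Finset.range κ.length).biUnion fun i =>
        Finset.Ico ((μ.row i : ℤ) - i) ((κ.row i : ℤ) - i) := by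
  ext x
  simp only [Finset.mem_image, Finset.mem_biUnion, Finset.mem_range, Finset.mem_Ico,
    skewCells, Finset.mem_filter]
  constructor
  · rintro ⟨c, ⟨hc1, hc2⟩, rfl⟩
    have hrow : c.2 < κ.row c.1 := (mem_cells κ c).mp hc1
    refine ⟨c.1, (row_pos_iff κ).mp (lt_of_le_of_lt (Nat.zero_le _) hrow), ?_, ?_⟩
    · omega
    · omega
  · rintro ⟨i, hi, h1, h2⟩
    refine ⟨(i, (x + i).toNat), ⟨?_, ?_⟩, ?_⟩
    · apply (mem_cells κ _).mpr
      simp only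
      omega
    · simp only
      omega
    · simp only
      omega

lemma res_image (k : ℕ) (μ κ : Ptn) :
    (skewCells μ κ).image (res k) =
      ((skewCells μ κ).image (fun c : ℕ × ℕ => ((c.2 : ℤ) - c.1))).image
        (Int.cast : ℤ → ZMod (k+1)) := by
  rw [Finset.image_image]
  apply Finset.image_congr
  intro c _
  simp only [Function.comp_apply, res]
  push_cast
  ring

lemma card_cast_window {n : ℕ} [NeZero n] (a : ℤ) (S : Finset ℤ)
    (hS : ∀ x ∈ S, a ≤ x ∧ x < a + n) :
    (S.image (Int.cast : ℤ → ZMod n)).card = S.card := by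
  apply Finset.card_image_of_injOn
  intro x hx y hy hxy
  have hd : (n : ℤ) ∣ y - x := by
    rw [ZMod.intCast_eq_intCast_iff] at hxy
    exact Int.ModEq.dvd hxy
  have h1 := hS x hx
  have h2 := hS y hy
  have habs : |y - x| < n := by
    rw [abs_lt]; omega
  have := Int.eq_zero_of_abs_lt_dvd hd habs
  omega

lemma cast_Ico_univ {n : ℕ} [NeZero n] (a b : ℤ) (h : a + n ≤ b) :
    (Finset.Ico a b).image (Int.cast : ℤ → ZMod n) = Finset.univ := by
  apply Finset.eq_univ_of_forall
  intro z
  rw [Finset.mem_image]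
  refine ⟨a + ((z - (a : ZMod n)).val : ℤ), ?_, ?_⟩
  · rw [Finset.mem_Ico]
    have hval : (z - (a : ZMod n)).val < n := ZMod.val_lt _
    omega
  · push_cast
    rw [ZMod.natCast_val, ZMod.cast_id]
    ring

lemma cast_shift {n : ℕ} (a b : ℤ) :
    (Finset.Ico a b).image (Int.cast : ℤ → ZMod n) =
      (Finset.Ico (a - n) (b - n)).image (Int.cast : ℤ → ZMod n) := by
  ext z
  simp only [Finset.mem_image, Finset.mem_Ico]
  constructor
  · rintro ⟨x, hx, rfl⟩
    refine ⟨x - n, by omega, ?_⟩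
    push_cast
    simp
  · rintro ⟨y, hy, rfl⟩
    refine ⟨y + n, by omega, ?_⟩
    push_cast
    simp

lemma card_biUnion_Ico (M : ℕ) (A B : ℕ → ℤ)
    (hchain : ∀ i j, i < j → j < M → B j ≤ A i) :
    ((Finset.range M).biUnion fun i => Finset.Ico (A i) (B i)).card =
      ∑ i ∈ Finset.range M, (B i - A i).toNat := by
  rw [Finset.card_biUnion]
  · apply Finset.sum_congr rfl
    intro i _
    exact Int.card_Ico _ _
  · intro i hi j hj hne
    rw [Finset.mem_coe, Finset.mem_range] at hi hj
    rw [Function.onFun, Finset.disjoint_left]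
    intro x hx1 hx2
    rw [Finset.mem_Ico] at hx1 hx2
    rcases Nat.lt_or_ge i j with h | h
    · have := hchain i j h hj; omega
    · have hji : j < i := by omega
      have := hchain j i hji hi; omega

lemma card_cast_biUnion {n : ℕ} [NeZero n] (M : ℕ) (A B : ℕ → ℤ) (a : ℤ)
    (hwin : ∀ i, i < M → a ≤ A i ∧ B i ≤ a + n)
    (hchain : ∀ i j, i < j → j < M → B j ≤ A i) :
    ((((Finset.range M).biUnion fun i => Finset.Ico (A i) (B i))).image
      (Int.cast : ℤ → ZMod n)).card = ∑ i ∈ Finset.range M, (B i - A i).toNat := by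
  rw [card_cast_window a]
  · exact card_biUnion_Ico M A B hchain
  · intro x hx
    rw [Finset.mem_biUnion] at hx
    rcases hx with ⟨i, hi, hx⟩
    rw [Finset.mem_Ico] at hx
    rw [Finset.mem_range] at hi
    have := hwin i hi
    omega

end Pf
namespace Pf
open Ptn

attribute [local instance] Classical.propDecidable

section main

variable {k l : ℕ} (hk : 0 < k) (hl1 : 1 ≤ l) (hlk : l ≤ k)
variable {mu : Ptn} (hsub : Ptn.Sub mu (rect k (k + 1 - l))) (hpos : 0 < mu.row (l - 1))

include hlk in
lemma rect_row (i : ℕ) : (rect k (k + 1 - l)).row i = if i < l then k + 1 - l else 0 := by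
  have hparts : (rect k (k + 1 - l)).parts = ↑((List.range l).map fun _ => k + 1 - l) := by
    show (Multiset.replicate (k + 1 - (k + 1 - l)) (k + 1 - l)).filter _ = _
    rw [Multiset.filter_eq_self.mpr]
    · rw [show k + 1 - (k + 1 - l) = l by omega]
      rw [List.map_const']
      simp [Multiset.coe_replicate]
    · intro x hx
      rw [Multiset.eq_of_mem_replicate hx]
      omega
  exact row_eq_of_parts _ _ l hparts (fun _ _ _ _ => le_refl _) i

include hlk hsub in
lemma mu_row_le (i : ℕ) : mu.row i ≤ k + 1 - l := by
  have := hsub i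
  rw [rect_row hlk] at this
  by_cases h : i < l
  · rwa [if_pos h] at this
  · rw [if_neg h] at this; omega

include hlk hsub hpos in
lemma mu_len : mu.length = l := by
  have h1 : l - 1 < mu.length := (row_pos_iff mu).mp hpos
  have h2 : ¬ (l < mu.length) := by
    rw [← row_pos_iff mu]
    have := hsub l
    rw [rect_row hlk, if_neg (by omega)] at this
    omega
  omega

include hl1 hlk hsub in
lemma mu_bounded : kBounded k mu := by
  intro x hx
  rw [parts_eq mu, Multiset.mem_coe, List.mem_map] at hx
  rcases hx with ⟨i, _, rfl⟩
  have := mu_row_le hlk hsub i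
  omega

include hl1 hlk hsub hpos in
lemma coreOf_mu : coreOf k mu = mu := by
  obtain ⟨hc, hb⟩ := coreOf_spec k mu (mu_bounded hl1 hlk hsub)
  have hlen := mu_len hlk hsub hpos
  have hstr := core_struct hl1 hlk hc hb (mu_row_le hlk hsub 0) (by omega)
  apply ptn_eq_of_row_eq
  intro i
  rcases Nat.eq_zero_or_pos i with rfl | hi
  · rw [hstr.2, if_neg]
    · omega
    · rintro ⟨h1, _⟩; omega
  · exact hstr.1 i hi

include hl1 hlk hsub hpos in
lemma coreSize_mu : coreSize k mu = mu.size := by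
  have hco := coreOf_mu hl1 hlk hsub hpos
  obtain ⟨hc, hb⟩ := coreOf_spec k mu (mu_bounded hl1 hlk hsub)
  rw [hco] at hc hb
  rw [coreSize_eq, size_eq]
  apply Finset.sum_congr rfl
  intro i hi
  have := bdd_row hc i
  rw [hb, if_pos (Finset.mem_range.mp hi)] at this
  exact this.symm

lemma sum_split0 (f : ℕ → ℕ) {M : ℕ} (h : 0 < M) :
    ∑ i ∈ Finset.range M, f i = f 0 + ∑ i ∈ Finset.Ico 1 M, f i := by
  rw [Finset.range_eq_Ico, Finset.sum_eq_sum_Ico_succ_bot h]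

lemma biUnion_Ico_one {α : Type*} [DecidableEq α] (M : ℕ) (f : ℕ → Finset α) :
    (Finset.Ico 1 M).biUnion f = (Finset.range (M - 1)).biUnion fun j => f (1 + j) := by
  ext a
  simp only [Finset.mem_biUnion, Finset.mem_Ico, Finset.mem_range]
  constructor
  · rintro ⟨i, ⟨h1, h2⟩, h3⟩
    exact ⟨i - 1, by omega, by rwa [show 1 + (i - 1) = i by omega]⟩
  · rintro ⟨j, hj, h3⟩
    exact ⟨1 + j, by omega, h3⟩

end main

end Pf
namespace Pf
open Ptn

attribute [local instance] Classical.propDecidable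

section fwd

variable {k l : ℕ} (hk : 0 < k) (hl1 : 1 ≤ l) (hlk : l ≤ k)
variable {mu : Ptn} (hsub : Ptn.Sub mu (rect k (k + 1 - l))) (hpos : 0 < mu.row (l - 1))

include hk hl1 hlk hsub hpos in
lemma forward {u : ℕ} (hu : u ≤ mu.row (l-1)) {ka : Ptn} (hka : kBounded k ka)
    (h : WeakStrip k u mu (coreOf k ka)) :
    IsHS mu ka ∧ ka.size = mu.size + u ∧ ka.row 0 ≤ k + 1 - l := by
  obtain ⟨hcoreκ, hbddκ⟩ := coreOf_spec k ka hka
  set τ := coreOf k ka with hτ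
  obtain ⟨hhs, hsize, hres⟩ := h
  have hmulen := mu_len hlk hsub hpos
  -- basic bounds
  have hlM : l ≤ τ.length := by
    have h1 : 0 < τ.row (l-1) := lt_of_lt_of_le hpos (hhs.1 (l-1))
    have := (row_pos_iff τ).mp h1
    omega
  have hMl : τ.length ≤ l + 1 := by
    have h1 := hhs.2 0
    rw [col_zero, col_zero, hmulen] at h1
    omega
  have h0M : 0 < τ.length := by omega
  have hrow_le : ∀ i, 1 ≤ i → τ.row i ≤ mu.row (i-1) := fun i hi => hs_row_succ hhs hi
  have hmurow_le : ∀ i, mu.row i ≤ k + 1 - l := mu_row_le hlk hsub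
  have hcnt_eq : ∀ i, 1 ≤ i → i < τ.length → cnt k τ i = τ.row i := by
    intro i hi1 hiM
    rcases Nat.lt_or_ge (cnt k τ i) (τ.row i) with hlt | hge
    · exfalso
      have hbig := core_bigcell hcoreκ hiM hlt
      have h3 : τ.col (τ.row i - cnt k τ i - 1) ≤ τ.length := col_le_length τ _
      have h4 : τ.row i ≤ mu.row (i-1) := hrow_le i hi1
      have h5 := hmurow_le (i-1)
      omega
    · have := cnt_le_row k τ i; omega
  -- sums
  have hsum1 : coreSize k τ = cnt k τ 0 + ∑ i ∈ Finset.Ico 1 τ.length, τ.row i := by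
    rw [coreSize_eq, sum_split0 _ h0M]
    congr 1
    apply Finset.sum_congr rfl
    intro i hi
    rcases Finset.mem_Ico.mp hi with ⟨hi1, hi2⟩
    exact hcnt_eq i hi1 hi2
  have hmusize : mu.size = mu.row 0 + ∑ i ∈ Finset.Ico 1 τ.length, mu.row i := by
    rw [size_eq, hmulen, ← sum_split0 _ h0M]
    apply Finset.sum_subset
    · exact Finset.range_subset_range.mpr hlM
    · intro x _ hx
      rw [Finset.mem_range] at hx
      exact row_eq_zero mu (by omega)
  have hE1 : coreSize k τ = mu.size + u := by
    rw [hsize, coreSize_mu hl1 hlk hsub hpos]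
  -- row-wise inequalities and difference sum
  have hmuτ : ∀ i, mu.row i ≤ τ.row i := hhs.1
  have hsplit_s : (∑ i ∈ Finset.Ico 1 τ.length, mu.row i) +
      (∑ i ∈ Finset.Ico 1 τ.length, (τ.row i - mu.row i)) =
      ∑ i ∈ Finset.Ico 1 τ.length, τ.row i := by
    rw [← Finset.sum_add_distrib]
    apply Finset.sum_congr rfl
    intro i _
    have := hmuτ i
    omega
  -- residues
  have hresx : (((Finset.range τ.length).biUnion fun i =>
      Finset.Ico ((mu.row i : ℤ) - i) ((τ.row i : ℤ) - i)).image
      (Int.cast : ℤ → ZMod (k+1))).card = u := by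
    rw [← skew_int mu τ, ← res_image k mu τ]
    exact hres
  -- (a) deeper rows give distinct residues
  have hcard1 : ((((Finset.Ico 1 τ.length).biUnion fun i =>
      Finset.Ico ((mu.row i : ℤ) - i) ((τ.row i : ℤ) - i)).image
      (Int.cast : ℤ → ZMod (k+1))).card) =
      ∑ i ∈ Finset.Ico 1 τ.length, (τ.row i - mu.row i) := by
    rw [biUnion_Ico_one]
    rw [card_cast_biUnion (τ.length - 1) _ _ (-(l:ℤ))]
    · rw [Finset.sum_Ico_eq_sum_range]
      apply Finset.sum_congr rfl
      intro j hj
      rw [Finset.mem_range] at hj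
      have h1 := hmuτ (1+j)
      have h2 : τ.row (1+j) ≤ mu.row j := by
        have := hrow_le (1+j) (by omega)
        simpa using this
      omega
    · intro i hi
      constructor
      · have : (1:ℤ) + i ≤ l := by omega
        have := mu_row_le hlk hsub (1+i)
        push_cast
        omega
      · have h2 : τ.row (1+i) ≤ mu.row i := by
          have := hrow_le (1+i) (by omega)
          simpa using this
        have h3 := hmurow_le i
        push_cast
        omega
    · intro i j hij hjM
      have h2 : τ.row (1+j) ≤ mu.row j := by
        have := hrow_le (1+j) (by omega)
        simpa using this
      have h3 : mu.row j ≤ mu.row (1+i) := row_anti mu (by omega)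
      push_cast
      omega
  have hsd_le_u : (∑ i ∈ Finset.Ico 1 τ.length, (τ.row i - mu.row i)) ≤ u := by
    rw [← hcard1, ← hresx]
    apply Finset.card_le_card
    apply Finset.image_subset_image
    apply Finset.biUnion_subset_biUnion_of_subset_left
    intro x hx
    rw [Finset.mem_Ico] at hx
    exact Finset.mem_range.mpr hx.2
  -- (b) row 0 residues
  have hIco0 : Finset.Ico ((mu.row 0 : ℤ)) ((τ.row 0 : ℤ)) ⊆
      (Finset.range τ.length).biUnion fun i =>
        Finset.Ico ((mu.row i : ℤ) - i) ((τ.row i : ℤ) - i) := by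
    intro x hx
    apply Finset.mem_biUnion.mpr
    refine ⟨0, Finset.mem_range.mpr h0M, ?_⟩
    rw [Finset.mem_Ico] at hx ⊢
    push_cast
    omega
  have hulow : u ≤ mu.row (l-1) := hu
  have hmul_le : mu.row (l-1) ≤ mu.row 0 := row_anti mu (Nat.zero_le _)
  have hrow0b : (τ.row 0 : ℤ) < (mu.row 0 : ℤ) + (k+1) := by
    by_contra hc
    push_neg at hc
    have huniv := cast_Ico_univ (n := k+1) ((mu.row 0 : ℤ)) ((τ.row 0 : ℤ)) (by push_cast at hc ⊢; omega)
    have hsubim : (Finset.univ : Finset (ZMod (k+1))) ⊆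
        ((Finset.range τ.length).biUnion fun i =>
          Finset.Ico ((mu.row i : ℤ) - i) ((τ.row i : ℤ) - i)).image
          (Int.cast : ℤ → ZMod (k+1)) := by
      rw [← huniv]
      exact Finset.image_subset_image hIco0
    have hcardu := Finset.card_le_card hsubim
    rw [hresx, Finset.card_univ, ZMod.card] at hcardu
    have := hmurow_le (l-1)
    omega
  have hb' : τ.row 0 ≤ mu.row 0 + u := by
    have hcardI : ((Finset.Ico ((mu.row 0 : ℤ)) ((τ.row 0 : ℤ))).image
        (Int.cast : ℤ → ZMod (k+1))).card = τ.row 0 - mu.row 0 := by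
      rw [card_cast_window ((mu.row 0 : ℤ))]
      · rw [Int.card_Ico]
        omega
      · intro x hx
        rw [Finset.mem_Ico] at hx
        push_cast
        omega
    have hle : ((Finset.Ico ((mu.row 0 : ℤ)) ((τ.row 0 : ℤ))).image
        (Int.cast : ℤ → ZMod (k+1))).card ≤ u := by
      rw [← hresx]
      exact Finset.card_le_card (Finset.image_subset_image hIco0)
    have := hmuτ 0
    omega
  -- the key equation E1 in usable form
  have hcle0 := cnt_le_row k τ 0
  have hEq : cnt k τ 0 + ∑ i ∈ Finset.Ico 1 τ.length, τ.row i =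
      mu.row 0 + (∑ i ∈ Finset.Ico 1 τ.length, mu.row i) + u := by
    rw [← hsum1, hE1, hmusize]
  -- (c) cnt 0 ≤ k + 1 - l
  have hcnt0_le : cnt k τ 0 ≤ k + 1 - l := by
    by_contra hcon
    push_neg at hcon
    have hcm_pos : 0 < cnt k τ 0 := by omega
    have hsmall := core_small_first (κ := τ) h0M hcm_pos
    have hB0 : τ.row 0 - cnt k τ 0 < mu.row (l-1) := by
      have hm0 := hmurow_le 0
      omega
    have hcol_ge : l ≤ τ.col (τ.row 0 - cnt k τ 0) := by
      rw [col_eq]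
      have hss : Finset.range l ⊆ (Finset.range τ.length).filter
          fun i => τ.row 0 - cnt k τ 0 < τ.row i := by
        intro x hx
        rw [Finset.mem_range] at hx
        refine Finset.mem_filter.mpr ⟨Finset.mem_range.mpr (by omega), ?_⟩
        have h1 : mu.row (l-1) ≤ mu.row x := row_anti mu (by omega)
        have h2 := hmuτ x
        omega
      calc l = (Finset.range l).card := (Finset.card_range _).symm
        _ ≤ _ := Finset.card_le_card hss
    omega
  -- (d) mu.row 0 ≤ cnt 0
  have hmu0_le : mu.row 0 ≤ cnt k τ 0 := by omega
  -- assembly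
  have hkalen : ka.length = τ.length := by rw [← hbddκ, bdd_length hcoreκ]
  have hkarow : ∀ i, ka.row i = if i < τ.length then cnt k τ i else 0 := by
    intro i
    have := bdd_row hcoreκ i
    rwa [hbddκ] at this
  have hka_le_τ : ∀ i, ka.row i ≤ τ.row i := by
    intro i
    rw [hkarow i]
    by_cases hi : i < τ.length
    · rw [if_pos hi]; exact cnt_le_row k τ i
    · rw [if_neg hi]; exact Nat.zero_le _
  refine ⟨⟨?_, ?_⟩, ?_, ?_⟩
  · -- Sub mu ka
    intro i
    rw [hkarow i]
    by_cases hi : i < τ.length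
    · rw [if_pos hi]
      rcases Nat.eq_zero_or_pos i with rfl | hi1
      · exact hmu0_le
      · rw [hcnt_eq i hi1 hi]; exact hmuτ i
    · rw [if_neg hi]
      rw [row_eq_zero mu (by omega)]
  · -- cols
    intro j
    exact le_trans (col_mono hka_le_τ j) (hhs.2 j)
  · -- size
    rw [size_eq, hkalen]
    have : ∑ i ∈ Finset.range τ.length, ka.row i = ∑ i ∈ Finset.range τ.length, cnt k τ i := by
      apply Finset.sum_congr rfl
      intro i hi
      rw [hkarow i, if_pos (Finset.mem_range.mp hi)]
    rw [this, ← coreSize_eq, hE1]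
  · -- row 0 bound
    rw [hkarow 0, if_pos h0M]
    exact hcnt0_le

end fwd

end Pf
namespace Pf
open Ptn

attribute [local instance] Classical.propDecidable

section bwd

variable {k l : ℕ} (hk : 0 < k) (hl1 : 1 ≤ l) (hlk : l ≤ k)
variable {mu : Ptn} (hsub : Ptn.Sub mu (rect k (k + 1 - l))) (hpos : 0 < mu.row (l - 1))

include hk hl1 hlk hsub hpos in
lemma backward {u : ℕ} (hu : u ≤ mu.row (l-1)) {ka : Ptn} (hka : kBounded k ka)
    (hhs2 : IsHS mu ka) (hsz : ka.size = mu.size + u) (hka1 : ka.row 0 ≤ k + 1 - l) :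
    WeakStrip k u mu (coreOf k ka) := by
  obtain ⟨hcoreκ, hbddκ⟩ := coreOf_spec k ka hka
  set τ := coreOf k ka with hτdef
  have hmulen := mu_len hlk hsub hpos
  have hkalen_ge : l ≤ ka.length := by
    have h1 : 0 < ka.row (l-1) := lt_of_lt_of_le hpos (hhs2.1 (l-1))
    have := (row_pos_iff ka).mp h1
    omega
  have hkalen_le : ka.length ≤ l + 1 := by
    have h1 := hhs2.2 0
    rw [col_zero, col_zero, hmulen] at h1
    omega
  have hka_rows_le : ∀ i, ka.row i ≤ k + 1 - l :=
    fun i => le_trans (row_anti ka (Nat.zero_le i)) hka1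
  obtain ⟨hrows1, hrow0⟩ := core_struct hl1 hlk hcoreκ hbddκ hka1 hkalen_le
  have hτlen : τ.length = ka.length := by rw [← hbddκ, bdd_length hcoreκ]
  have hka_le_τ : ∀ i, ka.row i ≤ τ.row i := by
    intro i
    rcases Nat.eq_zero_or_pos i with rfl | hi
    · rw [hrow0]; omega
    · rw [hrows1 i hi]
  have hcnt : ∀ i, i < τ.length → cnt k τ i = ka.row i := by
    intro i hi
    have := bdd_row hcoreκ i
    rw [hbddκ, if_pos hi] at this
    exact this.symm
  have hmuka : ∀ i, mu.row i ≤ ka.row i := hhs2.1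
  have hka_row_succ : ∀ i, 1 ≤ i → ka.row i ≤ mu.row (i-1) := fun i hi => hs_row_succ hhs2 hi
  have h0M : 0 < τ.length := by omega
  -- sums
  have hmusize : mu.size = ∑ i ∈ Finset.range ka.length, mu.row i := by
    rw [size_eq, hmulen]
    apply Finset.sum_subset (Finset.range_subset_range.mpr hkalen_ge)
    intro x _ hx
    rw [Finset.mem_range] at hx
    exact row_eq_zero mu (by omega)
  have hkasize : ka.size = ∑ i ∈ Finset.range ka.length, ka.row i := size_eq ka
  have hsplit_s : (∑ i ∈ Finset.range ka.length, mu.row i) +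
      (∑ i ∈ Finset.range ka.length, (ka.row i - mu.row i)) =
      ∑ i ∈ Finset.range ka.length, ka.row i := by
    rw [← Finset.sum_add_distrib]
    apply Finset.sum_congr rfl
    intro i _
    have := hmuka i
    omega
  have hdiffu : (∑ i ∈ Finset.range ka.length, (ka.row i - mu.row i)) = u := by omega
  refine ⟨⟨?_, ?_⟩, ?_, ?_⟩
  · -- Sub mu τ
    intro i
    exact le_trans (hmuka i) (hka_le_τ i)
  · -- col condition
    intro j
    by_cases hj : j < ka.row 0
    · have hcoleq : τ.col j = ka.col j := by
        rw [col_eq, col_eq, hτlen]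
        apply Finset.card_bij (fun a _ => a)
        · intro a ha
          rcases Finset.mem_filter.mp ha with ⟨ha1, ha2⟩
          refine Finset.mem_filter.mpr ⟨ha1, ?_⟩
          rcases Nat.eq_zero_or_pos a with rfl | ha3
          · exact hj
          · rwa [← hrows1 a ha3]
        · intro a _ b _ hab; exact hab
        · intro b hb
          rcases Finset.mem_filter.mp hb with ⟨hb1, hb2⟩
          refine ⟨b, Finset.mem_filter.mpr ⟨hb1, ?_⟩, rfl⟩
          exact lt_of_lt_of_le hb2 (hka_le_τ b)
      rw [hcoleq]
      exact hhs2.2 j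
    · have : τ.col j ≤ 1 := by
        rw [col_eq]
        have hss : ((Finset.range τ.length).filter fun i => j < τ.row i) ⊆ {0} := by
          intro x hx
          rcases Finset.mem_filter.mp hx with ⟨_, h2⟩
          rw [Finset.mem_singleton]
          by_contra hx0
          have hx1 : 1 ≤ x := by omega
          rw [hrows1 x hx1] at h2
          have := row_anti ka (Nat.zero_le x)
          omega
        calc _ ≤ ({0} : Finset ℕ).card := Finset.card_le_card hss
          _ = 1 := rfl
      omega
  · -- coreSize
    rw [coreSize_eq, coreSize_mu hl1 hlk hsub hpos]
    have : ∑ i ∈ Finset.range τ.length, cnt k τ i = ∑ i ∈ Finset.range ka.length, ka.row i := by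
      rw [hτlen]
      apply Finset.sum_congr rfl
      intro i hi
      rw [hcnt i (by rw [hτlen]; exact Finset.mem_range.mp hi)]
    rw [this, ← hkasize, hsz]
  · -- residue count
    rw [res_image k mu τ, skew_int mu τ, hτlen]
    -- common tail : the target card for intervals given by ka
    have htail : ((((Finset.range ka.length).biUnion fun i =>
        Finset.Ico ((mu.row i : ℤ) - i) ((ka.row i : ℤ) - i)).image
        (Int.cast : ℤ → ZMod (k+1))).card) = u := by
      rw [card_cast_biUnion (ka.length) _ _ (-(l:ℤ))]
      · rw [← hdiffu]
        apply Finset.sum_congr rfl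
        intro i hi
        have := hmuka i
        omega
      · intro i hi
        constructor
        · have h1 : (i:ℤ) ≤ l := by omega
          push_cast
          omega
        · have h2 := hka_rows_le i
          push_cast
          omega
      · intro i j hij hjM
        have h2 : ka.row j ≤ mu.row (j-1) := hka_row_succ j (by omega)
        have h3 : mu.row (j-1) ≤ mu.row i := row_anti mu (by omega)
        have h4 : ((j:ℤ)) = ((j-1 : ℕ) : ℤ) + 1 := by push_cast [Nat.cast_sub (by omega : 1 ≤ j)]; ring
        push_cast
        omega
    by_cases hsp : ka.length = l + 1 ∧ ka.row 0 = k + 1 - l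
    · -- shifted case
      rcases hsp with ⟨hsp1, hsp2⟩
      have hE : τ.row 0 = ka.row 0 + ka.row l := by
        rw [hrow0, if_pos ⟨hsp1, hsp2⟩]
      have hrowlmu : mu.row l = 0 := row_eq_zero mu (by omega)
      -- decompose the union
      have hdecomp : ((Finset.range ka.length).biUnion fun i =>
          Finset.Ico ((mu.row i : ℤ) - i) ((τ.row i : ℤ) - i)) =
          (((Finset.range ka.length).biUnion fun i =>
            Finset.Ico ((mu.row i : ℤ) - i) ((ka.row i : ℤ) - i)) ∪
          Finset.Ico ((ka.row 0 : ℤ)) ((ka.row 0 : ℤ) + ka.row l)) := by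
        ext x
        simp only [Finset.mem_biUnion, Finset.mem_union, Finset.mem_Ico, Finset.mem_range]
        constructor
        · rintro ⟨i, hi, hx1, hx2⟩
          rcases Nat.eq_zero_or_pos i with rfl | hi1
          · rw [hE] at hx2
            simp only [Nat.cast_zero, sub_zero] at hx1 hx2
            push_cast at hx2
            rcases lt_or_ge x ((ka.row 0 : ℤ)) with hc | hc
            · refine Or.inl ⟨0, by omega, ?_, ?_⟩
              · simp only [Nat.cast_zero, sub_zero]
                exact hx1
              · simp only [Nat.cast_zero, sub_zero]
                exact hc
            · exact Or.inr ⟨hc, by omega⟩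
          · rw [hrows1 i hi1] at hx2
            exact Or.inl ⟨i, hi, hx1, hx2⟩
        · rintro (⟨i, hi, hx1, hx2⟩ | ⟨hx1, hx2⟩)
          · refine ⟨i, hi, hx1, lt_of_lt_of_le hx2 ?_⟩
            have := hka_le_τ i
            omega
          · refine ⟨0, by omega, ?_, ?_⟩
            · have h1 : mu.row 0 ≤ ka.row 0 := hmuka 0
              push_cast
              omega
            · rw [hE]
              push_cast
              omega
      rw [hdecomp, Finset.image_union]
      have habs : (Finset.Ico ((ka.row 0 : ℤ)) ((ka.row 0 : ℤ) + ka.row l)).image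
          (Int.cast : ℤ → ZMod (k+1)) ⊆
          ((Finset.range ka.length).biUnion fun i =>
            Finset.Ico ((mu.row i : ℤ) - i) ((ka.row i : ℤ) - i)).image
            (Int.cast : ℤ → ZMod (k+1)) := by
        rw [cast_shift]
        apply Finset.image_subset_image
        intro x hx
        rw [Finset.mem_Ico] at hx
        apply Finset.mem_biUnion.mpr
        refine ⟨l, Finset.mem_range.mpr (by rw [hsp1]; omega), ?_⟩
        rw [Finset.mem_Ico, hrowlmu]
        have h1 := hsp2
        constructor
        · push_cast
          omega
        · push_cast
          omega
      rw [Finset.union_eq_left.mpr habs]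
      exact htail
    · -- plain case : τ.row = ka.row everywhere
      have hE : τ.row 0 = ka.row 0 := by rw [hrow0, if_neg hsp]; omega
      have hall : ∀ i, τ.row i = ka.row i := by
        intro i
        rcases Nat.eq_zero_or_pos i with rfl | hi
        · exact hE
        · exact hrows1 i hi
      have : ((Finset.range ka.length).biUnion fun i =>
          Finset.Ico ((mu.row i : ℤ) - i) ((τ.row i : ℤ) - i)) =
          ((Finset.range ka.length).biUnion fun i =>
          Finset.Ico ((mu.row i : ℤ) - i) ((ka.row i : ℤ) - i)) := by
        apply Finset.biUnion_congr rfl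
        intro i _
        rw [hall i]
      rw [this]
      exact htail

end bwd

end Pf
/-- for `μ ⊆ R_{k+1−l}` with `μ_l > 0` and `u ≤ μ_l`,
`c(κ)/c(μ)` is a weak u-strip iff `κ/μ` is a horizontal u-strip and `κ_1 ≤ k+1−l`. -/
theorem weakStrip_in_rect_iff
    (k : ℕ) (hk : 0 < k)
    (l : ℕ) (hl1 : 1 ≤ l) (hlk : l ≤ k)
    (mu : Ptn) (hsub : Ptn.Sub mu (rect k (k + 1 - l))) (hpos : 0 < mu.row (l - 1))
    (u : ℕ) (hu : u ≤ mu.row (l - 1))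
    (ka : Ptn) (hka : kBounded k ka) :
    WeakStrip k u (coreOf k mu) (coreOf k ka) ↔
      (IsHS mu ka ∧ ka.size = mu.size + u ∧ ka.row 0 ≤ k + 1 - l) := by
  rw [Pf.coreOf_mu hl1 hlk hsub hpos]
  constructor
  · intro h
    exact Pf.forward hk hl1 hlk hsub hpos hu hka h
  · rintro ⟨h1, h2, h3⟩
    exact Pf.backward hk hl1 hlk hsub hpos hu hka h1 h2 h3
end

section
/- Let 1 ≤ l ≤ k, let μ ⊆ ν ⊆ R_{k+1−l} be partitions with μ_l > 0 and ν/μ a horizontal strip, and let 0 ≤ x ≤ ν_l be an integer. Then r_{c(ν∪(x)), c(μ)} = r_{νμ} − δ[x ≥ μ_l], where (x) denotes the one-row partition with single part x (and (0) = ∅), and δ[A] equals 1 if A holds and 0 otherwise. -/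
/-!
Common combinatorial background: partitions (as multisets of positive parts),
Young diagram cells, hook lengths, (k+1)-cores, the bijection `b` from cores to
k-bounded partitions and its inverse `coreOf`, residues, horizontal / weak strips,
removable corners and the statistic `r_{νμ}`, k-rectangles, the ring
Λ^(k) = ℤ[h₁,…,h_k] (modelled as a polynomial ring in k variables, which is
legitimate since h₁,…,h_k are algebraically independent), and the Pieri-type
characterization of the K-k-Schur functions.
-/

noncomputable section

attribute [local instance] Classical.propDecidable

end

/-! ### Auxiliary development for STATEMENT 17 -/

noncomputable section

attribute [local instance] Classical.propDecidable

namespace S17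

/-- A downward-closed finite set of naturals consists of exactly the
naturals below its cardinality. -/
lemma dcFinset {n : ℕ} {T : Finset ℕ} (hT : ∀ b ∈ T, b < n)
    (hdc : ∀ a b : ℕ, a ≤ b → b ∈ T → a ∈ T) (i : ℕ) : i ∈ T ↔ i < T.card := by
  constructor
  · intro hi
    have h1 : Finset.range (i + 1) ⊆ T := by
      intro a ha
      exact hdc a i (Nat.lt_succ_iff.mp (Finset.mem_range.mp ha)) hi
    have := Finset.card_le_card h1
    simpa using this
  · intro hi
    by_contra hni
    have h2 : T ⊆ Finset.range i := by
      intro b hb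
      rcases Nat.lt_or_ge b i with h | h
      · simpa using h
      · exact absurd (hdc i b h hb) hni
    have := Finset.card_le_card h2
    simp only [Finset.card_range] at this
    omega

lemma ptn_ext {μ ν : Ptn} (h : μ.parts = ν.parts) : μ = ν := by
  cases μ; cases ν; simpa using h

lemma row_anti (μ : Ptn) {i i' : ℕ} (h : i ≤ i') : μ.row i' ≤ μ.row i := by
  set D := (μ.parts.sort (· ≤ ·)).reverse with hD
  rcases Nat.lt_or_ge i' D.length with h2 | h2
  · rcases Nat.eq_or_lt_of_le h with rfl | hlt
    · exact le_refl _
    · have hs : List.Pairwise (fun a b => b ≤ a) D := by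
        rw [hD, List.pairwise_reverse]
        exact Multiset.pairwise_sort _ _
      have h1 : i < D.length := lt_trans hlt h2
      have := List.pairwise_iff_get.mp hs ⟨i, h1⟩ ⟨i', h2⟩ (by simpa using hlt)
      simp only [Ptn.row, ← hD]
      rw [List.getD_eq_getElem _ _ h2, List.getD_eq_getElem _ _ h1]
      simpa using this
  · simp only [Ptn.row, ← hD]
    rw [List.getD_eq_default _ _ h2]
    exact Nat.zero_le _

lemma parts_eq_map_row (μ : Ptn) : (Multiset.range μ.length).map μ.row = μ.parts := by
  set D := (μ.parts.sort (· ≤ ·)).reverse with hD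
  have hlen : D.length = μ.length := by
    rw [hD, List.length_reverse, Multiset.length_sort]; rfl
  have hl : (List.range μ.length).map μ.row = D := by
    apply List.ext_getElem
    · simp [hlen]
    · intro n h1 h2
      simp only [List.getElem_map, List.getElem_range]
      simp only [Ptn.row, ← hD]
      rw [List.getD_eq_getElem _ _ h2]
  have hcoe : (Multiset.range μ.length).map μ.row = ((List.range μ.length).map μ.row : List ℕ) := rfl
  rw [hcoe, hl, hD, Multiset.coe_reverse, Multiset.sort_eq]

lemma mem_parts_iff (μ : Ptn) {a : ℕ} : a ∈ μ.parts ↔ ∃ i, i < μ.length ∧ μ.row i = a := by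
  rw [← parts_eq_map_row]
  simp [Multiset.mem_map, Multiset.mem_range]

lemma row_mem (μ : Ptn) {i : ℕ} (h : i < μ.length) : μ.row i ∈ μ.parts :=
  (mem_parts_iff μ).mpr ⟨i, h, rfl⟩

lemma row_pos_iff (μ : Ptn) {i : ℕ} : 0 < μ.row i ↔ i < μ.length := by
  constructor
  · intro h
    by_contra h2
    push_neg at h2
    have hlen : ((μ.parts.sort (· ≤ ·)).reverse).length = μ.length := by
      rw [List.length_reverse, Multiset.length_sort]; rfl
    have : μ.row i = 0 := by
      simp only [Ptn.row]
      exact List.getD_eq_default _ _ (by omega)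
    omega
  · intro h
    exact μ.pos _ (row_mem μ h)

lemma row_eq_zero (μ : Ptn) {i : ℕ} (h : μ.length ≤ i) : μ.row i = 0 := by
  by_contra h2
  have := (row_pos_iff μ (i := i)).mp (by omega)
  omega

lemma lt_col_iff (μ : Ptn) {i j : ℕ} : i < μ.col j ↔ j < μ.row i := by
  have hcol : μ.col j = ((Finset.range μ.length).filter (fun i => j < μ.row i)).card := by
    rw [Ptn.col, ← parts_eq_map_row, ← Multiset.countP_eq_card_filter, Multiset.countP_map,
      Finset.card_def, Finset.filter_val, Finset.range_val]
  have hdc := dcFinset (n := μ.length)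
      (T := (Finset.range μ.length).filter (fun i => j < μ.row i))
      (by intro b hb; exact Finset.mem_range.mp (Finset.mem_filter.mp hb).1)
      (by
        intro a b hab hb
        rcases Finset.mem_filter.mp hb with ⟨hb1, hb2⟩
        refine Finset.mem_filter.mpr ⟨Finset.mem_range.mpr ?_, ?_⟩
        · have := Finset.mem_range.mp hb1; omega
        · exact lt_of_lt_of_le hb2 (row_anti μ hab)) i
  rw [hcol, ← hdc]
  simp only [Finset.mem_filter, Finset.mem_range]
  constructor
  · tauto
  · intro h
    exact ⟨(row_pos_iff μ).mp (by omega), h⟩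

lemma col_le_length (μ : Ptn) (j : ℕ) : μ.col j ≤ μ.length :=
  Multiset.card_le_card (Multiset.filter_le _ _)

lemma col_anti (μ : Ptn) {j j' : ℕ} (h : j ≤ j') : μ.col j' ≤ μ.col j := by
  by_contra h2
  push_neg at h2
  have h3 : μ.col j < μ.col j' := h2
  have h4 := (lt_col_iff μ (i := μ.col j) (j := j')).mp h3
  have h5 : ¬ (μ.col j < μ.col j) := lt_irrefl _
  have h6 := (lt_col_iff μ (i := μ.col j) (j := j))
  have h7 : j < μ.row (μ.col j) := by omega
  exact h5 (h6.mpr h7)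

lemma row_eq_of_col (μ : Ptn) {i r : ℕ} (h : ∀ j, i < μ.col j ↔ j < r) : μ.row i = r := by
  have key : ∀ j, (j < μ.row i ↔ j < r) := fun j => (lt_col_iff μ).symm.trans (h j)
  have h1 := key r
  have h2 := key (μ.row i)
  omega

lemma length_le_size (μ : Ptn) : μ.length ≤ μ.size := by
  have := Multiset.card_nsmul_le_sum (s := μ.parts) (a := 1) (fun x hx => μ.pos x hx)
  simpa [Ptn.length, Ptn.size] using this

lemma row_le_size (μ : Ptn) (i : ℕ) : μ.row i ≤ μ.size := by
  rcases Nat.eq_zero_or_pos (μ.row i) with h | h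
  · omega
  · exact Multiset.single_le_sum (fun x _ => Nat.zero_le x) _ (row_mem μ ((row_pos_iff μ).mp h))

lemma mem_cells (μ : Ptn) {i j : ℕ} : (i, j) ∈ μ.cells ↔ j < μ.row i := by
  simp only [Ptn.cells, Finset.mem_filter, Finset.mem_product, Finset.mem_range]
  constructor
  · tauto
  · intro h
    refine ⟨⟨?_, ?_⟩, h⟩
    · exact lt_of_lt_of_le ((row_pos_iff μ).mp (by omega)) (length_le_size μ)
    · exact lt_of_lt_of_le h (row_le_size μ i)

lemma union_parts (μ ν : Ptn) : (μ ∪ ν).parts = μ.parts + ν.parts := rfl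

lemma col_union (μ ν : Ptn) (j : ℕ) : (μ ∪ ν).col j = μ.col j + ν.col j := by
  simp [Ptn.col, union_parts, Multiset.filter_add]

lemma rowPtn_parts {x : ℕ} (hx : 0 < x) : (rowPtn x).parts = {x} := by
  simp [rowPtn, Ptn.ofM, Multiset.filter_singleton, hx]

lemma rowPtn_zero_parts : (rowPtn 0).parts = 0 := by
  simp [rowPtn, Ptn.ofM, Multiset.filter_singleton]

lemma col_rowPtn (x j : ℕ) : (rowPtn x).col j = if j < x then 1 else 0 := by
  rcases Nat.eq_zero_or_pos x with rfl | hx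
  · simp [Ptn.col, rowPtn_zero_parts]
  · rw [Ptn.col, rowPtn_parts hx]
    by_cases h : j < x
    · simp [Multiset.filter_singleton, h]
    · simp [Multiset.filter_singleton, h]

lemma rect_parts {k l : ℕ} (hl1 : 1 ≤ l) (hlk : l ≤ k) :
    (rect k (k + 1 - l)).parts = Multiset.replicate l (k + 1 - l) := by
  have h2 : k + 1 - (k + 1 - l) = l := by omega
  rw [rect, h2]
  dsimp only [Ptn.ofM]
  exact Multiset.filter_eq_self.mpr (fun a ha => by
    have := Multiset.eq_of_mem_replicate ha; omega)

lemma col_rect {k l : ℕ} (hl1 : 1 ≤ l) (hlk : l ≤ k) (j : ℕ) :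
    (rect k (k + 1 - l)).col j = if j < k + 1 - l then l else 0 := by
  rw [Ptn.col, rect_parts hl1 hlk]
  by_cases h : j < k + 1 - l
  · rw [Multiset.filter_eq_self.mpr (fun a ha => by
      have := Multiset.eq_of_mem_replicate ha; omega)]
    simp [h]
  · rw [Multiset.filter_eq_nil.mpr (fun a ha => by
      have := Multiset.eq_of_mem_replicate ha; omega)]
    simp [h]

lemma rect_row {k l : ℕ} (hl1 : 1 ≤ l) (hlk : l ≤ k) (i : ℕ) :
    (rect k (k + 1 - l)).row i = if i < l then k + 1 - l else 0 := by
  apply row_eq_of_col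
  intro j
  rw [col_rect hl1 hlk]
  by_cases hi : i < l <;> by_cases hj : j < k + 1 - l <;> simp [hi, hj] <;> omega

end S17

end
noncomputable section
attribute [local instance] Classical.propDecidable
namespace S17

/-- number of cells of hook length at most `k` in row `i`. -/
def smallCt (k : ℕ) (κ : Ptn) (i : ℕ) : ℕ :=
  ((Finset.range (κ.row i)).filter fun j => κ.hook (i, j) ≤ k).card

lemma bdd_eq (k : ℕ) (κ : Ptn) :
    bdd k κ = Ptn.ofM ((Multiset.range κ.length).map (smallCt k κ)) := rfl

lemma smallCt_le (k : ℕ) (κ : Ptn) (i : ℕ) : smallCt k κ i ≤ κ.row i := by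
  have := Finset.card_filter_le (Finset.range (κ.row i)) (fun j => κ.hook (i, j) ≤ k)
  simpa [smallCt] using this

lemma hook_anti_right (κ : Ptn) {i j j' : ℕ} (hjj : j ≤ j') (hj' : j' < κ.row i) :
    κ.hook (i, j') ≤ κ.hook (i, j) := by
  have h1 : κ.col j' ≤ κ.col j := col_anti κ hjj
  have h2 : i < κ.col j' := (lt_col_iff κ).mpr hj'
  simp only [Ptn.hook]
  omega

/-- In a `(k+1)`-core, the last cell of each row has hook length at most `k`. -/
lemma last_hook_le {k : ℕ} {κ : Ptn} (hcore : IsCore (k + 1) κ) {i : ℕ}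
    (hi : 0 < κ.row i) : κ.hook (i, κ.row i - 1) ≤ k := by
  set j := κ.row i - 1 with hj
  set K := κ.col j with hK
  have hiK : i < K := (lt_col_iff κ).mpr (by omega)
  have hrows : ∀ t, i ≤ t → t < K → κ.row t = j + 1 := by
    intro t h1 h2
    have ha : κ.row t ≤ κ.row i := row_anti κ h1
    have hb : j < κ.row t := (lt_col_iff κ).mp h2
    omega
  by_contra hbig
  push_neg at hbig
  -- hook (i,j) = K - i ≥ k+1
  have hhook : κ.hook (i, j) = K - i := by
    simp only [Ptn.hook, ← hK]
    have : κ.row i = j + 1 := by omega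
    omega
  have hKi : k + 1 ≤ K - i := by omega
  set t0 := K - (k + 1) with ht0
  have h1 : i ≤ t0 := by omega
  have h2 : t0 < K := by omega
  have hcell : (t0, j) ∈ κ.cells := (mem_cells κ).mpr (by rw [hrows t0 h1 h2]; omega)
  have := hcore _ hcell
  apply this
  simp only [Ptn.hook, ← hK]
  rw [hrows t0 h1 h2]
  omega

lemma smallCt_pos {k : ℕ} {κ : Ptn} (hcore : IsCore (k + 1) κ) {i : ℕ}
    (hi : i < κ.length) : 0 < smallCt k κ i := by
  have hr : 0 < κ.row i := (row_pos_iff κ).mpr hi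
  have hmem : κ.row i - 1 ∈ (Finset.range (κ.row i)).filter (fun j => κ.hook (i, j) ≤ k) :=
    Finset.mem_filter.mpr ⟨Finset.mem_range.mpr (by omega), last_hook_le hcore hr⟩
  exact Finset.card_pos.mpr ⟨_, hmem⟩

/-- the cells of hook length `≤ k` in a row form a terminal segment. -/
lemma small_iff {k : ℕ} (κ : Ptn) (i : ℕ) {j : ℕ} (hj : j < κ.row i) :
    (κ.hook (i, j) ≤ k ↔ κ.row i - smallCt k κ i ≤ j) := by
  set T := (Finset.range (κ.row i)).filter (fun j => ¬ κ.hook (i, j) ≤ k) with hT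
  have hTdc : ∀ a b : ℕ, a ≤ b → b ∈ T → a ∈ T := by
    intro a b hab hb
    rcases Finset.mem_filter.mp hb with ⟨hb1, hb2⟩
    have hb1' := Finset.mem_range.mp hb1
    refine Finset.mem_filter.mpr ⟨Finset.mem_range.mpr (by omega), ?_⟩
    intro hle
    exact hb2 (le_trans (hook_anti_right κ hab (by omega)) hle)
  have hdc := dcFinset (n := κ.row i) (T := T)
      (fun b hb => Finset.mem_range.mp (Finset.mem_filter.mp hb).1) hTdc
  have hcards : smallCt k κ i + T.card = κ.row i := by
    rw [smallCt, hT]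
    rw [Finset.card_filter_add_card_filter_not]
    simp
  have hjT := hdc j
  constructor
  · intro h
    by_contra h2
    have hmem : j ∈ T := hjT.mpr (by omega)
    rw [hT] at hmem
    exact (Finset.mem_filter.mp hmem).2 h
  · intro h
    by_contra h2
    have hmem : j ∈ T := by
      rw [hT]; exact Finset.mem_filter.mpr ⟨Finset.mem_range.mpr hj, h2⟩
    have := hjT.mp hmem
    omega

lemma bdd_parts_eq {k : ℕ} {κ lam : Ptn} (hcore : IsCore (k + 1) κ)
    (hbdd : bdd k κ = lam) :
    (Multiset.range κ.length).map (smallCt k κ) = lam.parts ∧ κ.length = lam.length := by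
  have h1 : Multiset.filter (fun x => 0 < x) ((Multiset.range κ.length).map (smallCt k κ))
      = lam.parts := by
    rw [← hbdd, bdd_eq]
    rfl
  have h2 : Multiset.filter (fun x => 0 < x) ((Multiset.range κ.length).map (smallCt k κ))
      = (Multiset.range κ.length).map (smallCt k κ) := by
    apply Multiset.filter_eq_self.mpr
    intro a ha
    rcases Multiset.mem_map.mp ha with ⟨i, hi, rfl⟩
    exact smallCt_pos hcore (Multiset.mem_range.mp hi)
  constructor
  · rw [← h2, h1]
  · have := congrArg Multiset.card (h2.symm.trans h1)
    simpa [Ptn.length] using this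

lemma hooks_le_of_bounds {k a b : ℕ} (P : Ptn) (hp : ∀ p ∈ P.parts, p ≤ a)
    (hlen : P.length ≤ b) (hab : a + b ≤ k + 1) :
    ∀ i j : ℕ, j < P.row i → P.hook (i, j) ≤ k := by
  intro i j hj
  have h1 : P.row i ≤ a := hp _ (row_mem P ((row_pos_iff P).mp (by omega)))
  have h2 : P.col j ≤ b := le_trans (col_le_length P j) hlen
  have h3 : i < P.col j := (lt_col_iff P).mpr hj
  simp only [Ptn.hook]
  omega

lemma isCore_of_hooks_le {k : ℕ} (P : Ptn)
    (h : ∀ i j : ℕ, j < P.row i → P.hook (i, j) ≤ k) : IsCore (k + 1) P := by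
  intro c hc
  obtain ⟨i, j⟩ := c
  have := h i j ((mem_cells P).mp hc)
  omega

lemma bdd_eq_self {k : ℕ} (P : Ptn)
    (h : ∀ i j : ℕ, j < P.row i → P.hook (i, j) ≤ k) : bdd k P = P := by
  apply ptn_ext
  rw [bdd_eq]
  have h1 : ∀ i ∈ Multiset.range P.length, smallCt k P i = P.row i := by
    intro i _
    rw [smallCt, Finset.filter_true_of_mem (fun j hj => h i j (Finset.mem_range.mp hj))]
    simp
  dsimp only [Ptn.ofM]
  rw [Multiset.map_congr rfl h1, parts_eq_map_row]
  exact Multiset.filter_eq_self.mpr P.pos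

/-- Uniqueness, version 1: if all parts `p` of `lam` satisfy `p + length ≤ k+1`,
the only `(k+1)`-core with `bdd k κ = lam` is `lam` itself. -/
lemma uniq1 {k : ℕ} {κ lam : Ptn} (hcore : IsCore (k + 1) κ) (hbdd : bdd k κ = lam)
    (hparts : ∀ p ∈ lam.parts, p + lam.length ≤ k + 1) : κ = lam := by
  obtain ⟨hmap, hlen⟩ := bdd_parts_eq hcore hbdd
  have hrow : ∀ i, i < κ.length → smallCt k κ i = κ.row i := by
    intro i hi
    have hpos := smallCt_pos hcore hi
    have hle := smallCt_le k κ i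
    by_contra hne
    set t := κ.row i - smallCt k κ i with ht
    have ht1 : 1 ≤ t := by omega
    have htlt : t - 1 < κ.row i := by omega
    have hbig : ¬ κ.hook (i, t - 1) ≤ k := by
      intro hsm
      have := (small_iff κ i htlt).mp hsm
      omega
    have hne' : κ.hook (i, t - 1) ≠ k + 1 :=
      hcore _ ((mem_cells κ).mpr htlt)
    have hcolle : κ.col (t - 1) ≤ κ.length := col_le_length κ _
    have hicol : i < κ.col (t - 1) := (lt_col_iff κ).mpr htlt
    have hci : smallCt k κ i ∈ lam.parts := by
      rw [← hmap]
      exact Multiset.mem_map.mpr ⟨i, Multiset.mem_range.mpr hi, rfl⟩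
    have hb := hparts _ hci
    simp only [Ptn.hook] at hbig hne'
    omega
  apply ptn_ext
  rw [← hmap, ← parts_eq_map_row]
  exact (Multiset.map_congr rfl (fun i hi => hrow i (Multiset.mem_range.mp hi))).symm

end S17
end
noncomputable section
attribute [local instance] Classical.propDecidable
namespace S17

lemma map_range_succ (f : ℕ → ℕ) (n : ℕ) :
    (Multiset.range (n + 1)).map f = f 0 ::ₘ (Multiset.range n).map (fun i => f (i + 1)) := by
  have h1 : Multiset.range (n + 1) = 0 ::ₘ (Multiset.range n).map Nat.succ := by
    have : Multiset.range (n + 1) = ((0 :: List.map Nat.succ (List.range n) : List ℕ) : Multiset ℕ) :=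
      congrArg _ (List.range_succ_eq_map (n := n))
    rw [this]
    rfl
  rw [h1, Multiset.map_cons, Multiset.map_map]
  rfl

lemma union_rowPtn_zero (ν : Ptn) : ν ∪ rowPtn 0 = ν := by
  apply ptn_ext
  rw [union_parts, rowPtn_zero_parts, add_zero]

lemma nu_parts_le {l : ℕ} {ν : Ptn} (hν0 : ν.row 0 = l) :
    ∀ p ∈ ν.parts, p ≤ l := by
  intro p hp
  rcases (mem_parts_iff ν).mp hp with ⟨i, _, rfl⟩
  exact le_trans (row_anti ν (Nat.zero_le i)) (le_of_eq hν0)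

lemma nu_parts_ge {l x : ℕ} {ν : Ptn} (hνlen : ν.length = l) (hxν : x ≤ ν.row (l - 1)) :
    ∀ p ∈ ν.parts, x ≤ p := by
  intro p hp
  rcases (mem_parts_iff ν).mp hp with ⟨i, hi, rfl⟩
  exact le_trans hxν (row_anti ν (by omega))

lemma nu_col_full {l x : ℕ} {ν : Ptn} (hνlen : ν.length = l) (hxν : x ≤ ν.row (l - 1))
    {j : ℕ} (hj : j < x) : ν.col j = l := by
  rw [Ptn.col, Multiset.filter_eq_self.mpr
    (fun a ha => lt_of_lt_of_le hj (nu_parts_ge hνlen hxν a ha))]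
  exact hνlen

lemma nu_col_zero {m : ℕ} {ν : Ptn} (hm : ∀ p ∈ ν.parts, p ≤ m) {j : ℕ} (hj : m ≤ j) :
    ν.col j = 0 := by
  rw [Ptn.col, Multiset.filter_eq_nil.mpr (fun a ha => by have := hm a ha; omega)]
  rfl

/-- Structure of a partition whose parts are `y`, the parts of `ν` without one copy
of its largest part `m`, and one extra part `x`. -/
lemma hat_struct {k l x y : ℕ} {ν P : Ptn} (hl1 : 1 ≤ l) (hlk : l ≤ k)
    (hνlen : ν.length = l) (hν0 : ν.row 0 = k + 1 - l)
    (hx1 : 1 ≤ x) (hxν : x ≤ ν.row (l - 1)) (hy : k + 1 - l < y)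
    (hP : P.parts = y ::ₘ (ν.parts.erase (k + 1 - l) + {x})) :
    (∀ t, 1 ≤ t → t < l → P.row t = ν.row t) ∧ P.row l = x ∧ P.row 0 = y ∧
      P.length = l + 1 ∧
      (∀ j, P.col j = (if j < y then 1 else 0) +
        (ν.col j - (if j < k + 1 - l then 1 else 0)) + (if j < x then 1 else 0)) := by
  set m := k + 1 - l with hm
  have hm1 : 1 ≤ m := by omega
  have hmmem : m ∈ ν.parts := by rw [← hν0]; exact row_mem ν (by omega)
  have hple := nu_parts_le (l := m) hν0
  have hpge := nu_parts_ge hνlen hxν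
  have hcons : ν.parts = m ::ₘ ν.parts.erase m := (Multiset.cons_erase hmmem).symm
  have hxm : x ≤ m := le_trans hxν (by rw [← hν0]; exact row_anti ν (Nat.zero_le _))
  have hνcol_le : ∀ j, ν.col j ≤ l := fun j => le_trans (col_le_length ν j) (le_of_eq hνlen)
  have hνcol_pos : ∀ j, j < m → 1 ≤ ν.col j := by
    intro j hj
    have := (lt_col_iff ν (i := 0) (j := j)).mpr (by omega)
    omega
  have herase_col : ∀ j, Multiset.card ((ν.parts.erase m).filter (fun a => j < a))
      = ν.col j - (if j < m then 1 else 0) := by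
    intro j
    have hc : ν.col j = Multiset.card (Multiset.filter (fun a => j < a) (m ::ₘ ν.parts.erase m)) := by
      rw [Ptn.col, ← hcons]
    rw [Multiset.filter_cons] at hc
    by_cases hj : j < m
    · simp only [if_pos hj] at hc
      simp only [if_pos hj]
      rw [Multiset.card_add] at hc
      simp at hc
      omega
    · simp only [if_neg hj] at hc
      simp only [if_neg hj]
      rw [Multiset.card_add] at hc
      simp at hc
      omega
  have hPcol : ∀ j, P.col j = (if j < y then 1 else 0) +
      (ν.col j - (if j < m then 1 else 0)) + (if j < x then 1 else 0) := by
    intro j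
    rw [Ptn.col, hP, Multiset.filter_cons, Multiset.filter_add, Multiset.filter_singleton]
    simp only [Multiset.card_add]
    rw [herase_col j]
    by_cases h1 : j < y <;> by_cases h2 : j < x <;> simp [h1, h2] <;> ring
  have hrowt : ∀ t, 1 ≤ t → t < l → P.row t = ν.row t := by
    intro t ht1 htl
    apply row_eq_of_col
    intro j
    rw [hPcol j]
    by_cases h1 : j < x
    · have hfull := nu_col_full hνlen hxν h1
      have hrt : j < ν.row t := lt_of_lt_of_le (lt_of_lt_of_le h1 hxν) (row_anti ν (by omega))
      have hjy : j < y := by omega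
      have hjm : j < m := by omega
      simp only [if_pos hjy, if_pos h1, if_pos hjm, hfull]
      constructor
      · intro _; exact hrt
      · intro _; omega
    · by_cases h2 : j < m
      · have hpos := hνcol_pos j h2
        have hjy : j < y := by omega
        have hval : (if j < y then 1 else 0) + (ν.col j - (if j < m then 1 else 0)) +
            (if j < x then 1 else 0) = ν.col j := by
          simp only [if_pos hjy, if_pos h2, if_neg h1]
          omega
        rw [hval]
        exact lt_col_iff ν
      · have hz : ν.col j = 0 := nu_col_zero hple (by omega)
        have hrt : ¬ j < ν.row t := by
          have : ν.row t ≤ ν.row 0 := row_anti ν (Nat.zero_le t)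
          omega
        constructor
        · intro hcontra
          exfalso
          have hb : (if j < y then (1:ℕ) else 0) ≤ 1 := by split <;> omega
          rw [if_neg h1, if_neg h2, hz] at hcontra
          omega
        · intro h3; exact absurd h3 hrt
  have hrowl : P.row l = x := by
    apply row_eq_of_col
    intro j
    rw [hPcol j]
    by_cases h1 : j < x
    · have hfull := nu_col_full hνlen hxν h1
      have hjy : j < y := by omega
      have hjm : j < m := by omega
      simp only [if_pos hjy, if_pos h1, if_pos hjm, hfull]
      constructor
      · intro _; exact h1
      · intro _; omega
    · constructor
      · intro hcontra
        exfalso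
        have hle := hνcol_le j
        have hb : (if j < y then (1:ℕ) else 0) ≤ 1 := by split <;> omega
        rw [if_neg h1] at hcontra
        by_cases h4 : j < m
        · have hpos := hνcol_pos j h4
          rw [if_pos h4] at hcontra
          omega
        · have hz : ν.col j = 0 := nu_col_zero hple (by omega)
          rw [if_neg h4, hz] at hcontra
          omega
      · intro h3; exact absurd h3 h1
  have hrow0 : P.row 0 = y := by
    apply row_eq_of_col
    intro j
    rw [hPcol j]
    constructor
    · intro hcontra
      by_contra h3
      push_neg at h3
      have hz : ν.col j = 0 := nu_col_zero hple (by omega)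
      have h1 : ¬ j < x := by omega
      have h2 : ¬ j < m := by omega
      simp [if_neg h1, if_neg h2, if_neg (show ¬ j < y by omega), hz] at hcontra
    · intro h3
      by_cases h1 : j < x
      · have hfull := nu_col_full hνlen hxν h1
        simp only [if_pos h3, if_pos h1, if_pos (show j < m by omega), hfull]
        omega
      · by_cases h2 : j < m
        · have hpos := hνcol_pos j h2
          simp only [if_pos h3, if_neg h1, if_pos h2]
          omega
        · simp only [if_pos h3, if_neg h1, if_neg h2]
          omega
  have hlenP : P.length = l + 1 := by
    have hc : Multiset.card ν.parts = l := hνlen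
    rw [Ptn.length, hP]
    simp [Multiset.card_erase_of_mem hmmem, hc]
    omega
  exact ⟨hrowt, hrowl, hrow0, hlenP, hPcol⟩

end S17
end
noncomputable section
attribute [local instance] Classical.propDecidable
namespace S17

lemma no_big_in_row {k : ℕ} {κ : Ptn} (hcore : IsCore (k + 1) κ) {i : ℕ}
    (hi : i < κ.length) (hbound : smallCt k κ i + κ.length < k + 2 + i) :
    smallCt k κ i = κ.row i := by
  have hpos := smallCt_pos hcore hi
  have hle := smallCt_le k κ i
  by_contra hne
  set t := κ.row i - smallCt k κ i with ht
  have ht1 : 1 ≤ t := by omega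
  have htlt : t - 1 < κ.row i := by omega
  have hbig : ¬ κ.hook (i, t - 1) ≤ k := by
    intro hsm
    have := (small_iff κ i htlt).mp hsm
    omega
  have hne' : κ.hook (i, t - 1) ≠ k + 1 := hcore _ ((mem_cells κ).mpr htlt)
  have hcolle : κ.col (t - 1) ≤ κ.length := col_le_length κ _
  have hicol : i < κ.col (t - 1) := (lt_col_iff κ).mpr htlt
  simp only [Ptn.hook] at hbig hne'
  omega

lemma union_rows {l x : ℕ} {ν : Ptn} (hl1 : 1 ≤ l) (hνlen : ν.length = l)
    (hxν : x ≤ ν.row (l - 1)) :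
    (∀ t, t < l → (ν ∪ rowPtn x).row t = ν.row t) ∧ (ν ∪ rowPtn x).row l = x := by
  have hcol : ∀ j, (ν ∪ rowPtn x).col j = ν.col j + (if j < x then 1 else 0) := by
    intro j
    rw [col_union, col_rowPtn]
  have hν_ge : ∀ t, t < l → x ≤ ν.row t := fun t ht => le_trans hxν (row_anti ν (by omega))
  have hνcol_le : ∀ j, ν.col j ≤ l := fun j => le_trans (col_le_length ν j) (le_of_eq hνlen)
  constructor
  · intro t ht
    apply row_eq_of_col
    intro j
    rw [hcol j]
    by_cases hj : j < x
    · have hfull := nu_col_full hνlen hxν hj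
      rw [if_pos hj, hfull]
      constructor
      · intro _; exact lt_of_lt_of_le hj (hν_ge t ht)
      · intro _; omega
    · rw [if_neg hj, add_zero]
      exact lt_col_iff ν
  · apply row_eq_of_col
    intro j
    rw [hcol j]
    by_cases hj : j < x
    · have hfull := nu_col_full hνlen hxν hj
      rw [if_pos hj, hfull]
      constructor
      · intro _; exact hj
      · intro _; omega
    · rw [if_neg hj, add_zero]
      constructor
      · intro hcontra; exact absurd hcontra (by have := hνcol_le j; omega)
      · intro h3; exact absurd h3 hj

/-- Uniqueness, version 2: the rows `1, …, l` of any `(k+1)`-core mapping to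
`ν ∪ (x)` under `b`, where `ν₁ = k+1-l`. -/
lemma uniq2 {k l x : ℕ} {ν κ : Ptn} (hl1 : 1 ≤ l) (hlk : l ≤ k)
    (hνlen : ν.length = l) (hν0 : ν.row 0 = k + 1 - l)
    (hx1 : 1 ≤ x) (hxν : x ≤ ν.row (l - 1))
    (hcore : IsCore (k + 1) κ) (hbdd : bdd k κ = ν ∪ rowPtn x) :
    (∀ t, 1 ≤ t → t < l → κ.row t = ν.row t) ∧ κ.row l = x := by
  set m := k + 1 - l with hm
  have hm1 : 1 ≤ m := by omega
  have hmmem : m ∈ ν.parts := by rw [← hν0]; exact row_mem ν (by omega)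
  have hple := nu_parts_le (l := m) hν0
  have hLparts : (ν ∪ rowPtn x).parts = ν.parts + {x} := by
    rw [union_parts, rowPtn_parts hx1]
  have hxm : x ≤ m := le_trans hxν (by rw [← hν0]; exact row_anti ν (Nat.zero_le _))
  have hLple : ∀ p ∈ (ν ∪ rowPtn x).parts, p ≤ m := by
    intro p hp
    rw [hLparts] at hp
    rcases Multiset.mem_add.mp hp with h | h
    · exact hple p h
    · rw [Multiset.mem_singleton.mp h]; exact hxm
  have hLlen : (ν ∪ rowPtn x).length = l + 1 := by
    rw [Ptn.length, hLparts, Multiset.card_add]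
    have : Multiset.card ν.parts = l := hνlen
    simp [this]
  obtain ⟨hmap, hlen⟩ := bdd_parts_eq hcore hbdd
  rw [hLlen] at hlen
  have hrowi : ∀ i, 1 ≤ i → i < l + 1 → smallCt k κ i = κ.row i := by
    intro i h1 h2
    apply no_big_in_row hcore (by omega)
    have hci : smallCt k κ i ∈ (ν ∪ rowPtn x).parts := by
      rw [← hmap]
      exact Multiset.mem_map.mpr ⟨i, Multiset.mem_range.mpr (by omega), rfl⟩
    have := hLple _ hci
    omega
  -- row 0 must contain a big cell
  have hc0mem : smallCt k κ 0 ∈ (ν ∪ rowPtn x).parts := by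
    rw [← hmap]
    exact Multiset.mem_map.mpr ⟨0, Multiset.mem_range.mpr (by omega), rfl⟩
  have hc0le : smallCt k κ 0 ≤ m := hLple _ hc0mem
  have h0 : smallCt k κ 0 ≠ κ.row 0 := by
    intro h0
    -- then κ = ν ∪ (x), which has a hook of length exactly k+1 at (0,0)
    have hall : ∀ i ∈ Multiset.range κ.length, smallCt k κ i = κ.row i := by
      intro i hi
      have hi' := Multiset.mem_range.mp hi
      rcases Nat.eq_zero_or_pos i with rfl | hpos
      · exact h0
      · exact hrowi i hpos (by omega)
    have hκeq : κ = ν ∪ rowPtn x := by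
      apply ptn_ext
      rw [← hmap, ← parts_eq_map_row]
      exact (Multiset.map_congr rfl hall).symm
    -- compute the hook at (0,0)
    have hrow0 : (ν ∪ rowPtn x).row 0 = m := by
      have hmem0 : m ∈ (ν ∪ rowPtn x).parts := by
        rw [hLparts]; exact Multiset.mem_add.mpr (Or.inl hmmem)
      rcases (mem_parts_iff _).mp hmem0 with ⟨i, hi, hrow⟩
      have h1 : m ≤ (ν ∪ rowPtn x).row 0 := by
        rw [← hrow]; exact row_anti _ (Nat.zero_le i)
      have h2 : (ν ∪ rowPtn x).row 0 ≤ m :=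
        hLple _ (row_mem _ (by rw [hLlen]; omega))
      omega
    have hcol0 : (ν ∪ rowPtn x).col 0 = l + 1 := by
      rw [Ptn.col, Multiset.filter_eq_self.mpr (fun a ha => (ν ∪ rowPtn x).pos a ha)]
      rw [← hLlen]; rfl
    have hcell : ((0 : ℕ), (0 : ℕ)) ∈ (ν ∪ rowPtn x).cells :=
      (mem_cells _).mpr (by rw [hrow0]; omega)
    rw [hκeq] at hcore
    apply hcore _ hcell
    simp only [Ptn.hook, hrow0, hcol0]
    omega
  -- analyze the big cells of row 0
  have hle0 := smallCt_le k κ 0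
  have hpos0 := smallCt_pos hcore (show 0 < κ.length by omega)
  set t0 := κ.row 0 - smallCt k κ 0 with ht0
  have ht01 : 1 ≤ t0 := by omega
  have htlt : t0 - 1 < κ.row 0 := by omega
  have hbig : ¬ κ.hook (0, t0 - 1) ≤ k := by
    intro hsm
    have := (small_iff κ 0 htlt).mp hsm
    omega
  have hne' : κ.hook (0, t0 - 1) ≠ k + 1 := hcore _ ((mem_cells κ).mpr htlt)
  have hcolle : κ.col (t0 - 1) ≤ l + 1 := by
    have := col_le_length κ (t0 - 1); omega
  have hicol : 0 < κ.col (t0 - 1) := (lt_col_iff κ).mpr htlt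
  have hc0 : smallCt k κ 0 = m := by
    simp only [Ptn.hook] at hbig hne'
    omega
  -- multiset decomposition of κ.parts
  have hmap' : (Multiset.range (l + 1)).map (smallCt k κ) = (ν ∪ rowPtn x).parts := by
    rw [← hlen]; exact hmap
  have hκparts : κ.parts = κ.row 0 ::ₘ (ν.parts.erase m + {x}) := by
    have h1 : κ.parts = κ.row 0 ::ₘ (Multiset.range l).map (fun i => κ.row (i + 1)) := by
      rw [← parts_eq_map_row, hlen, map_range_succ]
    have h2 : (ν ∪ rowPtn x).parts
        = m ::ₘ (Multiset.range l).map (fun i => κ.row (i + 1)) := by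
      rw [← hmap', map_range_succ, hc0]
      congr 1
      apply Multiset.map_congr rfl
      intro i hi
      exact hrowi (i + 1) (by omega) (by have := Multiset.mem_range.mp hi; omega)
    have h3 : (Multiset.range l).map (fun i => κ.row (i + 1))
        = (ν ∪ rowPtn x).parts.erase m := by
      rw [h2, Multiset.erase_cons_head]
    rw [h1, h3, hLparts, Multiset.erase_add_left_pos _ hmmem]
  have hy : m < κ.row 0 := by omega
  obtain ⟨hr1, hr2, _, _, _⟩ := hat_struct hl1 hlk hνlen hν0 hx1 hxν hy hκparts
  exact ⟨hr1, hr2⟩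

end S17
end
noncomputable section
attribute [local instance] Classical.propDecidable
namespace S17

lemma hat_exists {k l x : ℕ} {ν : Ptn} (hl1 : 1 ≤ l) (hlk : l ≤ k)
    (hνlen : ν.length = l) (hν0 : ν.row 0 = k + 1 - l)
    (hx1 : 1 ≤ x) (hxν : x ≤ ν.row (l - 1)) :
    ∃ P : Ptn, IsCore (k + 1) P ∧ bdd k P = ν ∪ rowPtn x := by
  set m := k + 1 - l with hm
  have hm1 : 1 ≤ m := by omega
  have hmmem : m ∈ ν.parts := by rw [← hν0]; exact row_mem ν (by omega)
  have hple := nu_parts_le (l := m) hν0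
  have hxm : x ≤ m := le_trans hxν (by rw [← hν0]; exact row_anti ν (Nat.zero_le _))
  have hνcol_le : ∀ j, ν.col j ≤ l := fun j => le_trans (col_le_length ν j) (le_of_eq hνlen)
  have hνcol_pos : ∀ j, j < m → 1 ≤ ν.col j := by
    intro j hj
    have := (lt_col_iff ν (i := 0) (j := j)).mpr (by omega)
    omega
  have hPex : ∃ P : Ptn, P.parts = (m + x) ::ₘ (ν.parts.erase m + {x}) := by
    refine ⟨⟨(m + x) ::ₘ (ν.parts.erase m + {x}), ?_⟩, rfl⟩
    intro a ha
    rcases Multiset.mem_cons.mp ha with rfl | ha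
    · omega
    · rcases Multiset.mem_add.mp ha with h | h
      · exact ν.pos a (Multiset.mem_of_mem_erase h)
      · rw [Multiset.mem_singleton.mp h]; omega
  obtain ⟨P, hP⟩ := hPex
  obtain ⟨hr1, hr2, hr0, hlenP, hPcol⟩ :=
    hat_struct hl1 hlk hνlen hν0 hx1 hxν (show m < m + x by omega) hP
  -- column values of P by ranges
  have hcolA : ∀ j, j < x → P.col j = l + 1 := by
    intro j hj
    rw [hPcol j, nu_col_full hνlen hxν hj, if_pos (show j < m + x by omega), if_pos hj,
      if_pos (show j < m by omega)]
    omega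
  have hcolB : ∀ j, x ≤ j → j < m → P.col j = ν.col j := by
    intro j h1 h2
    have := hνcol_pos j h2
    rw [hPcol j, if_pos (show j < m + x by omega), if_pos h2, if_neg (show ¬ j < x by omega)]
    omega
  have hcolC : ∀ j, m ≤ j → j < m + x → P.col j = 1 := by
    intro j h1 h2
    rw [hPcol j, nu_col_zero hple h1, if_pos h2, if_neg (show ¬ j < m by omega),
      if_neg (show ¬ j < x by omega)]
  -- hook lengths
  have hbig0 : ∀ j, j < x → ¬ P.hook (0, j) ≤ k ∧ P.hook (0, j) ≠ k + 1 := by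
    intro j hj
    have hcol := hcolA j hj
    refine ⟨?_, ?_⟩ <;> (simp only [Ptn.hook, hr0, hcol]; omega)
  have hsmall : ∀ t j, j < P.row t → (1 ≤ t ∨ x ≤ j) → P.hook (t, j) ≤ k := by
    intro t j hj hcase
    have htb : t < l + 1 := by
      by_contra hcon
      push_neg at hcon
      rw [row_eq_zero P (by omega)] at hj
      omega
    rcases Nat.eq_zero_or_pos t with rfl | ht1
    · have hxj : x ≤ j := by rcases hcase with h | h; omega; exact h
      rw [hr0] at hj
      by_cases hjm : j < m
      · have hc := hcolB j hxj hjm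
        have := hνcol_le j
        simp only [Ptn.hook, hr0, hc]
        omega
      · have hc := hcolC j (by omega) (by omega)
        simp only [Ptn.hook, hr0, hc]
        omega
    · rcases Nat.lt_or_ge t l with htl | htl
      · have hrt := hr1 t ht1 htl
        have hrle : ν.row t ≤ m := by rw [← hν0]; exact row_anti ν (Nat.zero_le t)
        rw [hrt] at hj
        by_cases hjx : j < x
        · have hc := hcolA j hjx
          simp only [Ptn.hook, hrt, hc]
          omega
        · have hjm : j < m := by omega
          have hc := hcolB j (by omega) hjm
          have h2 := hνcol_le j
          simp only [Ptn.hook, hrt, hc]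
          omega
      · have htl' : t = l := by omega
        subst htl'
        rw [hr2] at hj
        have hc := hcolA j (by omega)
        simp only [Ptn.hook, hr2, hc]
        omega
  refine ⟨P, ?_, ?_⟩
  · -- IsCore
    intro c hc
    obtain ⟨t, j⟩ := c
    have hj := (mem_cells P).mp hc
    by_cases hcase : 1 ≤ t ∨ x ≤ j
    · have := hsmall t j hj hcase
      omega
    · push_neg at hcase
      have ht : t = 0 := by omega
      subst ht
      exact (hbig0 j (by omega)).2
  · -- bdd
    have hsc0 : smallCt k P 0 = m := by
      rw [smallCt, hr0]
      have heq : (Finset.range (m + x)).filter (fun j => P.hook (0, j) ≤ k)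
          = Finset.Ico x (m + x) := by
        ext a
        simp only [Finset.mem_filter, Finset.mem_range, Finset.mem_Ico]
        constructor
        · rintro ⟨h1, h2⟩
          refine ⟨?_, h1⟩
          by_contra h3
          push_neg at h3
          exact (hbig0 a h3).1 h2
        · rintro ⟨h1, h2⟩
          exact ⟨h2, hsmall 0 a (by rw [hr0]; omega) (Or.inr h1)⟩
      rw [heq, Nat.card_Ico]
      omega
    have hsct : ∀ t, 1 ≤ t → t < l + 1 → smallCt k P t = P.row t := by
      intro t h1 h2
      rw [smallCt,
        Finset.filter_true_of_mem (fun j hj => hsmall t j (Finset.mem_range.mp hj) (Or.inl h1))]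
      simp
    apply ptn_ext
    rw [bdd_eq]
    dsimp only [Ptn.ofM]
    have hmapP : (Multiset.range P.length).map (smallCt k P)
        = m ::ₘ (ν.parts.erase m + {x}) := by
      rw [hlenP, map_range_succ, hsc0]
      congr 1
      have h1 : (Multiset.range l).map (fun i => smallCt k P (i + 1))
          = (Multiset.range l).map (fun i => P.row (i + 1)) :=
        Multiset.map_congr rfl
          (fun i hi => hsct (i + 1) (by omega) (by have := Multiset.mem_range.mp hi; omega))
      rw [h1]
      have h2 : P.parts = P.row 0 ::ₘ (Multiset.range l).map (fun i => P.row (i + 1)) := by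
        rw [← parts_eq_map_row, hlenP, map_range_succ]
      rw [hP, hr0] at h2
      exact ((Multiset.cons_inj_right _).mp h2).symm
    rw [hmapP, Multiset.filter_eq_self.mpr (fun a ha => by
      rcases Multiset.mem_cons.mp ha with rfl | ha
      · omega
      · rcases Multiset.mem_add.mp ha with h | h
        · exact ν.pos a (Multiset.mem_of_mem_erase h)
        · rw [Multiset.mem_singleton.mp h]; omega)]
    rw [union_parts, rowPtn_parts hx1, ← Multiset.cons_add, Multiset.cons_erase hmmem]

end S17
end
noncomputable section
attribute [local instance] Classical.propDecidable
namespace S17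

lemma main_aux (k : ℕ) (hk : 0 < k) (l : ℕ) (hl1 : 1 ≤ l) (hlk : l ≤ k)
    (mu nu : Ptn) (hmn : Ptn.Sub mu nu) (hsub : Ptn.Sub nu (rect k (k + 1 - l)))
    (hpos : 0 < mu.row (l - 1)) (hhs : IsHS mu nu)
    (x : ℕ) (hx : x ≤ nu.row (l - 1)) :
    (rnm k (coreOf k (nu ∪ rowPtn x)) (coreOf k mu) : ℤ) =
      (rnm k nu mu : ℤ) - (if mu.row (l - 1) ≤ x then 1 else 0) := by
  have hνl1 : 0 < nu.row (l - 1) := lt_of_lt_of_le hpos (hmn _)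
  have hνrow_le : ∀ i, nu.row i ≤ (if i < l then k + 1 - l else 0) := by
    intro i
    have := hsub i
    rw [rect_row hl1 hlk i] at this
    exact this
  have hνrowl : nu.row l = 0 := by
    have := hνrow_le l
    simp at this
    omega
  have hνlen : nu.length = l := by
    have h1 := (row_pos_iff nu (i := l - 1)).mp hνl1
    have h2 : ¬ (0 : ℕ) < nu.row l := by omega
    have h3 := (row_pos_iff nu (i := l))
    omega
  have hμrowl : mu.row l = 0 := by
    have := hmn l
    omega
  have hμlen : mu.length = l := by
    have h1 := (row_pos_iff mu (i := l - 1)).mp hpos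
    have h3 := (row_pos_iff mu (i := l))
    omega
  have hνrow0 : nu.row 0 ≤ k + 1 - l := by
    have h := hνrow_le 0
    rw [if_pos (show (0:ℕ) < l by omega)] at h
    exact h
  have hμrow_le : ∀ i, mu.row i ≤ k + 1 - l := by
    intro i
    have h1 := hmn i
    have h2 := hνrow_le i
    by_cases h : i < l <;> simp [h] at h2 <;> omega
  -- the core of mu is mu itself
  have hμpartsb : ∀ p ∈ mu.parts, p + mu.length ≤ k + 1 := by
    intro p hp
    rcases (mem_parts_iff mu).mp hp with ⟨i, hi, rfl⟩
    have := hμrow_le i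
    omega
  have hμhooks : ∀ i j : ℕ, j < mu.row i → mu.hook (i, j) ≤ k :=
    hooks_le_of_bounds (a := k + 1 - l) (b := l) mu
      (fun p hp => by
        rcases (mem_parts_iff mu).mp hp with ⟨i, _, rfl⟩; exact hμrow_le i)
      (le_of_eq hμlen) (by omega)
  have hCμ : coreOf k mu = mu := by
    have hspec := Classical.epsilon_spec
      (p := fun κ => IsCore (k + 1) κ ∧ bdd k κ = mu)
      ⟨mu, isCore_of_hooks_le mu hμhooks, bdd_eq_self mu hμhooks⟩
    exact uniq1 hspec.1 hspec.2 hμpartsb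
  -- the rows 1..l of the core of nu ∪ (x)
  have hBrows : (∀ t, 1 ≤ t → t < l → (coreOf k (nu ∪ rowPtn x)).row t = nu.row t)
      ∧ (coreOf k (nu ∪ rowPtn x)).row l = x := by
    rcases Nat.eq_zero_or_pos x with rfl | hx1
    · rw [union_rowPtn_zero nu]
      have hνpartsb : ∀ p ∈ nu.parts, p + nu.length ≤ k + 1 := by
        intro p hp
        rcases (mem_parts_iff nu).mp hp with ⟨i, hi, rfl⟩
        have h1 := hνrow_le i
        have h2 : i < l := by omega
        simp [h2] at h1
        omega
      have hνhooks : ∀ i j : ℕ, j < nu.row i → nu.hook (i, j) ≤ k :=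
        hooks_le_of_bounds (a := k + 1 - l) (b := l) nu
          (fun p hp => by
            rcases (mem_parts_iff nu).mp hp with ⟨i, hi, rfl⟩
            have h1 := hνrow_le i
            have h2 : i < l := by omega
            simp [h2] at h1
            omega)
          (le_of_eq hνlen) (by omega)
      have hspec := Classical.epsilon_spec
        (p := fun κ => IsCore (k + 1) κ ∧ bdd k κ = nu)
        ⟨nu, isCore_of_hooks_le nu hνhooks, bdd_eq_self nu hνhooks⟩
      have hEq : coreOf k nu = nu := uniq1 hspec.1 hspec.2 hνpartsb
      rw [hEq]
      exact ⟨fun t _ _ => rfl, hνrowl⟩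
    · by_cases hν1 : nu.row 0 = k + 1 - l
      · obtain ⟨P, hPcore, hPbdd⟩ := hat_exists hl1 hlk hνlen hν1 hx1 hx
        have hspec := Classical.epsilon_spec
          (p := fun κ => IsCore (k + 1) κ ∧ bdd k κ = nu ∪ rowPtn x)
          ⟨P, hPcore, hPbdd⟩
        exact uniq2 hl1 hlk hνlen hν1 hx1 hx hspec.1 hspec.2
      · have hν1' : nu.row 0 + 1 ≤ k + 1 - l := by omega
        have hUparts : (nu ∪ rowPtn x).parts = nu.parts + {x} := by
          rw [union_parts, rowPtn_parts hx1]
        have hUlen : (nu ∪ rowPtn x).length = l + 1 := by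
          rw [Ptn.length, hUparts, Multiset.card_add]
          have : Multiset.card nu.parts = l := hνlen
          simp [this]
        have hUb : ∀ p ∈ (nu ∪ rowPtn x).parts, p + (nu ∪ rowPtn x).length ≤ k + 1 := by
          intro p hp
          rw [hUparts] at hp
          rw [hUlen]
          have hp0 : p ≤ nu.row 0 := by
            rcases Multiset.mem_add.mp hp with h | h
            · exact nu_parts_le rfl p h
            · rw [Multiset.mem_singleton.mp h]
              exact le_trans hx (row_anti nu (Nat.zero_le _))
          omega
        have hUhooks : ∀ i j : ℕ, j < (nu ∪ rowPtn x).row i → (nu ∪ rowPtn x).hook (i, j) ≤ k :=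
          hooks_le_of_bounds (a := k - l) (b := l + 1) _
            (fun p hp => by
              have := hUb p hp
              rw [hUlen] at this
              omega)
            (le_of_eq hUlen) (by omega)
        have hspec := Classical.epsilon_spec
          (p := fun κ => IsCore (k + 1) κ ∧ bdd k κ = nu ∪ rowPtn x)
          ⟨nu ∪ rowPtn x, isCore_of_hooks_le _ hUhooks, bdd_eq_self _ hUhooks⟩
        have hEq : coreOf k (nu ∪ rowPtn x) = nu ∪ rowPtn x := uniq1 hspec.1 hspec.2 hUb
        rw [hEq]
        obtain ⟨hu1, hu2⟩ := union_rows hl1 hνlen hx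
        exact ⟨fun t _ htl => hu1 t htl, hu2⟩
  rw [hCμ]
  set B := coreOf k (nu ∪ rowPtn x) with hB
  obtain ⟨hB1, hB2⟩ := hBrows
  set SR := mu.cells.filter (fun c => RemCorner mu c ∧ ¬ c.2 < nu.row (c.1 + 1)) with hSR
  set SL := mu.cells.filter (fun c => RemCorner mu c ∧ ¬ c.2 < B.row (c.1 + 1)) with hSL
  have hrnmR : rnm k nu mu = (SR.image (res k)).card := rfl
  have hrnmL : rnm k B mu = (SL.image (res k)).card := rfl
  -- basic facts about members of SR
  have hmemSR : ∀ i j : ℕ, (i, j) ∈ SR →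
      j + 1 = mu.row i ∧ mu.row (i + 1) ≤ j ∧ i < l ∧ j < k + 1 - l := by
    intro i j hc
    rcases Finset.mem_filter.mp hc with ⟨hcell, hrc, _⟩
    have hj : j < mu.row i := (mem_cells mu).mp hcell
    have hrc1 : j + 1 = mu.row i := hrc.1
    have hrc2 : mu.row (i + 1) ≤ j := hrc.2
    have hil : i < l := by
      have := (row_pos_iff mu (i := i)).mp (by omega)
      omega
    have hjm : j < k + 1 - l := by
      have := hμrow_le i
      omega
    exact ⟨hrc1, hrc2, hil, hjm⟩
  have hinj : Set.InjOn (res k) ↑SR := by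
    rintro ⟨i1, j1⟩ h1 ⟨i2, j2⟩ h2 heq
    obtain ⟨e1, f1, g1, b1⟩ := hmemSR i1 j1 (Finset.mem_coe.mp h1)
    obtain ⟨e2, f2, g2, b2⟩ := hmemSR i2 j2 (Finset.mem_coe.mp h2)
    simp only [res] at heq
    have hcast : ((j1 + i2 : ℕ) : ZMod (k + 1)) = ((j2 + i1 : ℕ) : ZMod (k + 1)) := by
      push_cast
      linear_combination heq
    have hmod : (j1 + i2) % (k + 1) = (j2 + i1) % (k + 1) :=
      (ZMod.natCast_eq_natCast_iff _ _ _).mp hcast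
    rw [Nat.mod_eq_of_lt (by omega), Nat.mod_eq_of_lt (by omega)] at hmod
    have hii : i1 = i2 := by
      rcases Nat.lt_trichotomy i1 i2 with h | h | h
      · exfalso
        have hle : mu.row i2 ≤ mu.row (i1 + 1) := row_anti mu (by omega)
        omega
      · exact h
      · exfalso
        have hle : mu.row i1 ≤ mu.row (i2 + 1) := row_anti mu (by omega)
        omega
    have hjj : j1 = j2 := by
      rw [hii] at e1
      omega
    rw [hii, hjj]
  -- the bottom-row corner
  have hcorner_mem : ((l - 1 : ℕ), mu.row (l - 1) - 1) ∈ SR := by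
    rw [hSR]
    apply Finset.mem_filter.mpr
    have hll : l - 1 + 1 = l := by omega
    refine ⟨(mem_cells mu (i := l - 1) (j := mu.row (l - 1) - 1)).mpr (by omega),
      ⟨show mu.row (l - 1) - 1 + 1 = mu.row (l - 1) by omega, ?_⟩, ?_⟩
    · show mu.row (l - 1 + 1) ≤ mu.row (l - 1) - 1
      rw [hll, hμrowl]
      omega
    · show ¬ mu.row (l - 1) - 1 < nu.row (l - 1 + 1)
      rw [hll, hνrowl]
      omega
  have hSL_eq : SL = if mu.row (l - 1) ≤ x then SR.erase (l - 1, mu.row (l - 1) - 1) else SR := by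
    have hll : l - 1 + 1 = l := by omega
    ext c
    obtain ⟨i, j⟩ := c
    by_cases hqx : mu.row (l - 1) ≤ x
    · rw [if_pos hqx]
      rw [hSL, hSR]
      simp only [Finset.mem_erase, Finset.mem_filter]
      constructor
      · rintro ⟨hcell, hrc, hnb⟩
        have hj : j < mu.row i := (mem_cells mu).mp hcell
        have hrc1 : j + 1 = mu.row i := hrc.1
        have hil : i < l := by
          have := (row_pos_iff mu (i := i)).mp (by omega)
          omega
        rcases Nat.lt_or_ge (i + 1) l with hil2 | hil2
        · refine ⟨?_, hcell, hrc, ?_⟩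
          · intro hceq
            rw [Prod.mk.injEq] at hceq
            omega
          · rw [← hB1 (i + 1) (by omega) hil2]
            exact hnb
        · exfalso
          have hieq : i = l - 1 := by omega
          rw [hieq, hll, hB2] at hnb
          rw [hieq] at hrc1
          omega
      · rintro ⟨hne, hcell, hrc, hnb⟩
        have hj : j < mu.row i := (mem_cells mu).mp hcell
        have hrc1 : j + 1 = mu.row i := hrc.1
        have hil : i < l := by
          have := (row_pos_iff mu (i := i)).mp (by omega)
          omega
        refine ⟨hcell, hrc, ?_⟩
        rcases Nat.lt_or_ge (i + 1) l with hil2 | hil2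
        · rw [hB1 (i + 1) (by omega) hil2]
          exact hnb
        · exfalso
          have hieq : i = l - 1 := by omega
          rw [hieq] at hrc1
          apply hne
          rw [Prod.mk.injEq]
          omega
    · rw [if_neg hqx]
      rw [hSL, hSR]
      simp only [Finset.mem_filter]
      constructor
      · rintro ⟨hcell, hrc, hnb⟩
        have hj : j < mu.row i := (mem_cells mu).mp hcell
        have hil : i < l := by
          have := (row_pos_iff mu (i := i)).mp (by omega)
          omega
        refine ⟨hcell, hrc, ?_⟩
        rcases Nat.lt_or_ge (i + 1) l with hil2 | hil2
        · rw [← hB1 (i + 1) (by omega) hil2]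
          exact hnb
        · have hieq : i + 1 = l := by omega
          rw [hieq, hνrowl]
          omega
      · rintro ⟨hcell, hrc, hnb⟩
        have hj : j < mu.row i := (mem_cells mu).mp hcell
        have hrc1 : j + 1 = mu.row i := hrc.1
        have hil : i < l := by
          have := (row_pos_iff mu (i := i)).mp (by omega)
          omega
        refine ⟨hcell, hrc, ?_⟩
        rcases Nat.lt_or_ge (i + 1) l with hil2 | hil2
        · rw [hB1 (i + 1) (by omega) hil2]
          exact hnb
        · have hieq : i = l - 1 := by omega
          rw [hieq] at hrc1
          rw [show i + 1 = l by omega, hB2]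
          omega
  have hSL_sub : SL ⊆ SR := by
    rw [hSL_eq]
    split
    · exact Finset.erase_subset _ _
    · exact Finset.Subset.refl _
  have hcardR : (SR.image (res k)).card = SR.card :=
    Finset.card_image_of_injOn hinj
  have hcardL : (SL.image (res k)).card = SL.card :=
    Finset.card_image_of_injOn (hinj.mono (by exact_mod_cast hSL_sub))
  rw [hrnmR, hrnmL, hcardR, hcardL, hSL_eq]
  by_cases hqx : mu.row (l - 1) ≤ x
  · rw [if_pos hqx, if_pos hqx, Finset.card_erase_of_mem hcorner_mem]
    have h1 : 1 ≤ SR.card := Finset.card_pos.mpr ⟨_, hcorner_mem⟩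
    push_cast [h1]
    omega
  · rw [if_neg hqx, if_neg hqx]
    simp

end S17
end
/-- `r_{c(ν∪(x)), c(μ)} = r_{νμ} − δ[x ≥ μ_l]`. -/
theorem rnm_union_row_eq
    (k : ℕ) (hk : 0 < k)
    (l : ℕ) (hl1 : 1 ≤ l) (hlk : l ≤ k)
    (mu nu : Ptn) (hmn : Ptn.Sub mu nu) (hsub : Ptn.Sub nu (rect k (k + 1 - l)))
    (hpos : 0 < mu.row (l - 1)) (hhs : IsHS mu nu)
    (x : ℕ) (hx : x ≤ nu.row (l - 1)) :
    (rnm k (coreOf k (nu ∪ rowPtn x)) (coreOf k mu) : ℤ) =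
      (rnm k nu mu : ℤ) - (if mu.row (l - 1) ≤ x then 1 else 0) :=
  S17.main_aux k hk l hl1 hlk mu nu hmn hsub hpos hhs x hx
end

section
/- Let l ≥ 1 and let β_1, β_2, …, β_{l+1} be integers such that β_i ≥ β_{i+1} ≥ β_i − 1 for each 1 ≤ i ≤ l, and set β_0 := β_1. Define the (l+1)×(l+1) integer matrices, with rows and columns indexed by 0,1,…,l: C with entries C_{r,s} = (−1)^{r−s} binom(β_{s+1}, r−s), and D with entries D_{r,s} = binom(β_r + r − s − 1, r − s). Then D·C is the identity matrix (and hence C is invertible with C^{−1} = D). -/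
/-!
Common combinatorial background: partitions (as multisets of positive parts),
Young diagram cells, hook lengths, (k+1)-cores, the bijection `b` from cores to
k-bounded partitions and its inverse `coreOf`, residues, horizontal / weak strips,
removable corners and the statistic `r_{νμ}`, k-rectangles, the ring
Λ^(k) = ℤ[h₁,…,h_k] (modelled as a polynomial ring in k variables, which is
legitimate since h₁,…,h_k are algebraically independent), and the Pieri-type
characterization of the K-k-Schur functions.
-/

noncomputable section

attribute [local instance] Classical.propDecidable

end

open Finset

section helpers
lemma descPoch_prod' (m : ℕ) (n : ℤ) :
    (descPochhammer ℤ m).eval n = ∏ i ∈ range m, (n - i) := by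
  induction m with
  | zero => simp
  | succ m ih =>
      rw [descPochhammer_succ_right, Polynomial.eval_mul, ih, prod_range_succ]
      simp

lemma fact_smul_choose' (m : ℕ) (n : ℤ) :
    (m.factorial : ℤ) * Ring.choose n m = ∏ i ∈ range m, (n - i) := by
  rw [← descPoch_prod', Polynomial.eval_eq_smeval,
    Ring.descPochhammer_eq_factorial_smul_choose, nsmul_eq_mul]

lemma ibinom_natCast' (n : ℤ) (m : ℕ) : ibinom n (m : ℤ) = Ring.choose n m := by
  rw [ibinom, if_neg (by omega : ¬ (m : ℤ) < 0), Int.toNat_natCast, ← fact_smul_choose',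
    Int.mul_ediv_cancel_left _ (by exact_mod_cast m.factorial_ne_zero)]

lemma ibinom_neg' (n j : ℤ) (h : j < 0) : ibinom n j = 0 := if_pos h

lemma prod_neg_int' (m : ℕ) (f : ℕ → ℤ) :
    ∏ i ∈ range m, (-(f i)) = (-1)^m * ∏ i ∈ range m, f i := by
  induction m with
  | zero => simp
  | succ m ih => rw [prod_range_succ, ih, prod_range_succ]; ring

lemma choose_neg_int' (n : ℤ) (m : ℕ) :
    Ring.choose (n + m - 1) m = (-1 : ℤ) ^ m * Ring.choose (-n) m := by
  have h1 : (m.factorial : ℤ) ≠ 0 := by exact_mod_cast m.factorial_ne_zero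
  apply mul_left_cancel₀ h1
  rw [fact_smul_choose', mul_left_comm, fact_smul_choose', ← prod_range_reflect]
  have h2 : (∏ i ∈ range m, (-n - (i:ℤ))) = ∏ i ∈ range m, (-(n + (i:ℤ))) :=
    prod_congr rfl fun i _ => by ring
  rw [h2, prod_neg_int', ← mul_assoc, ← mul_pow]
  norm_num
  refine prod_congr rfl fun i hi => ?_
  simp only [mem_range] at hi
  rw [show m - 1 - i = m - (i + 1) by omega, Nat.cast_sub (by omega)]
  push_cast
  ring

lemma vandermonde_range' (x y : ℤ) (m : ℕ) :
    Ring.choose (x + y) m = ∑ j ∈ range (m + 1), Ring.choose x j * Ring.choose y (m - j) := by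
  rw [Ring.add_choose_eq m (Commute.all x y), Finset.Nat.sum_antidiagonal_eq_sum_range_succ_mk]
end helpers


/-- the binomial matrices `C` and `D` are mutually inverse: `D · C = 1`. -/
theorem binom_matrix_inverse
    (l : ℕ) (hl : 1 ≤ l) (β : ℕ → ℤ) (hβ0 : β 0 = β 1)
    (hβ : ∀ i, 1 ≤ i → i ≤ l → β (i + 1) ≤ β i ∧ β i - 1 ≤ β (i + 1)) :
    (Matrix.of fun r s : Fin (l + 1) =>
        ibinom (β (r : ℕ) + ((r : ℕ) : ℤ) - ((s : ℕ) : ℤ) - 1) (((r : ℕ) : ℤ) - ((s : ℕ) : ℤ))) *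
      (Matrix.of fun r s : Fin (l + 1) =>
        (-1 : ℤ) ^ ((r : ℕ) - (s : ℕ)) *
          ibinom (β ((s : ℕ) + 1)) (((r : ℕ) : ℤ) - ((s : ℕ) : ℤ))) = 1 := by
  have mono : ∀ i j : ℕ, 1 ≤ i → i ≤ j → j ≤ l + 1 →
      β j ≤ β i ∧ β i ≤ β j + (j : ℤ) - (i : ℤ) := by
    intro i j h1 hij hj
    induction j with
    | zero => omega
    | succ j ih =>
        rcases eq_or_lt_of_le hij with h | h
        · rw [← h]; omega
        · have h2 := ih (by omega) (by omega)
          have h3 := hβ j (by omega) (by omega)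
          push_cast
          omega
  ext r s
  rw [Matrix.mul_apply, Matrix.one_apply]
  simp only [Matrix.of_apply]
  set f : ℕ → ℤ := fun t =>
    ibinom (β r + ((r:ℕ) : ℤ) - (t : ℤ) - 1) (((r:ℕ) : ℤ) - (t : ℤ)) *
      ((-1 : ℤ) ^ (t - (s:ℕ)) * ibinom (β ((s:ℕ) + 1)) ((t : ℤ) - ((s:ℕ) : ℤ))) with hf
  have hsum : (∑ t : Fin (l+1),
      ibinom (β r + ((r:ℕ) : ℤ) - ((t:ℕ) : ℤ) - 1) (((r:ℕ) : ℤ) - ((t:ℕ) : ℤ)) *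
      ((-1 : ℤ) ^ ((t:ℕ) - (s:ℕ)) * ibinom (β ((s:ℕ) + 1)) (((t:ℕ) : ℤ) - ((s:ℕ) : ℤ))))
      = ∑ t ∈ range (l+1), f t := Fin.sum_univ_eq_sum_range f (l+1)
  rw [hsum]
  by_cases hrs : (r : ℕ) < (s : ℕ)
  · rw [if_neg (fun h => by subst h; omega), Finset.sum_eq_zero]
    intro t ht
    simp only [hf]
    by_cases htr : t ≤ (r : ℕ)
    · rw [ibinom_neg' _ _ (by omega : (t : ℤ) - ((s:ℕ) : ℤ) < 0), mul_zero, mul_zero]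
    · rw [ibinom_neg' _ _ (by omega : ((r:ℕ) : ℤ) - (t : ℤ) < 0), zero_mul]
  · push_neg at hrs
    set m : ℕ := (r : ℕ) - (s : ℕ) with hm
    have h1 : ∑ t ∈ range (l+1), f t = ∑ t ∈ Icc (s:ℕ) (r:ℕ), f t := by
      refine (Finset.sum_subset (fun t ht => by
        simp only [mem_Icc] at ht; simp only [mem_range]; omega) fun t ht hnt => ?_).symm
      simp only [mem_Icc, not_and_or, not_le] at hnt
      simp only [hf]
      rcases hnt with h | h
      · rw [ibinom_neg' _ _ (by omega : (t : ℤ) - ((s:ℕ) : ℤ) < 0), mul_zero, mul_zero]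
      · rw [ibinom_neg' _ _ (by omega : ((r:ℕ) : ℤ) - (t : ℤ) < 0), zero_mul]
    have h2 : ∑ t ∈ Icc (s:ℕ) (r:ℕ), f t = ∑ j ∈ range (m+1), f ((r:ℕ) - j) := by
      refine Finset.sum_nbij' (fun t => (r:ℕ) - t) (fun j => (r:ℕ) - j) ?_ ?_ ?_ ?_ ?_
      · intro t ht; simp only [mem_Icc] at ht; simp only [mem_range]; omega
      · intro j hj; simp only [mem_range] at hj; simp only [mem_Icc]; omega
      · intro t ht; simp only [mem_Icc] at ht; omega
      · intro j hj; simp only [mem_range] at hj; omega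
      · intro t ht; simp only [mem_Icc] at ht; congr 1; omega
    have h3 : ∀ j ∈ range (m+1), f ((r:ℕ) - j) =
        (-1 : ℤ) ^ m * (Ring.choose (-(β r)) j * Ring.choose (β ((s:ℕ)+1)) (m - j)) := by
      intro j hj
      simp only [mem_range] at hj
      have hc1 : (((r:ℕ) - j : ℕ) : ℤ) = ((r:ℕ) : ℤ) - (j : ℤ) := by
        rw [Nat.cast_sub (by omega)]
      simp only [hf, hc1]
      rw [show ((r:ℕ) : ℤ) - (((r:ℕ) : ℤ) - (j:ℤ)) = (j : ℤ) by ring,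
        show ((r:ℕ) : ℤ) - (j:ℤ) - ((s:ℕ) : ℤ) = ((m - j : ℕ) : ℤ) by
          rw [Nat.cast_sub (by omega)]; push_cast; omega,
        show (r:ℕ) - j - (s:ℕ) = m - j by omega,
        ibinom_natCast', ibinom_natCast',
        show β r + ((r:ℕ):ℤ) - (((r:ℕ):ℤ) - (j:ℤ)) - 1 = β r + (j:ℤ) - 1 by ring,
        choose_neg_int']
      have hpow : ((-1:ℤ))^j * (-1)^(m-j) = (-1)^m := by rw [← pow_add]; congr 1; omega
      rw [← hpow]; ring
    rw [h1, h2, Finset.sum_congr rfl h3, ← Finset.mul_sum, ← vandermonde_range']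
    rw [show -β r + β ((s:ℕ)+1) = β ((s:ℕ)+1) - β r by ring]
    by_cases hrse : (r : ℕ) = (s : ℕ)
    · have : r = s := Fin.ext hrse
      subst this
      rw [if_pos rfl]
      simp [hm, hrse, Ring.choose_zero_right]
    · rw [if_neg (fun h => hrse (by rw [h]))]
      have hsr : (s : ℕ) < (r : ℕ) := by omega
      have hmono := mono ((s:ℕ)+1) (r:ℕ) (by omega) (by omega) (by omega)
      have hd : β ((s:ℕ)+1) - β r = (((β ((s:ℕ)+1) - β r).toNat : ℕ) : ℤ) := by omega
      rw [hd, Ring.choose_natCast, Nat.choose_eq_zero_of_lt (by push_cast at hd ⊢; omega),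
        Nat.cast_zero, mul_zero]
end
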